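/- arXiv:2108.05279 — 4 statements merged into one kernel-verified Lean document; each statement's English description precedes it below -/
import Mathlib

section
/- If B₁, B₂ ⊆ ℝ are disjoint bounded intervals, then E[N(B₁) N(B₂)] = n²λ²μ² Q_σ([0,1],B₁) Q_σ([0,1],B₂) + nλμ² Q_σ²([0,1],B₁,B₂) = E[N(B₁)] E[N(B₂)] + nλμ² Q_σ²([0,1],B₁,B₂), where E[N(B)] = nλμ Q_σ([0,1],B). -/
open MeasureTheory Filter Set

noncomputable section

/-- Rescaled dispersal density `f_σ(z) = σ⁻¹ f(z/σ)`. -/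
def fdil (σ : ℝ) (f : ℝ → ℝ) (z : ℝ) : ℝ := σ⁻¹ * f (z / σ)

/-- The dispersal point-process model of Hoffmann–Trabs: `M` is a homogeneous Poisson
point process on `[0,1]` with intensity `n·λ·dx` and, conditionally on `M`, `N` is a Cox
point process on `ℝ` with intensity `μ (M ∗ f_σ)(y) dy`.  The joint law is characterized
through the joint Laplace functional (Campbell's formula). -/
structure IsDispersalModel {Ω : Type*} [MeasurableSpace Ω] (P : Measure Ω)
    (n : ℕ) (lam mu σ : ℝ) (f : ℝ → ℝ) (M N : Ω → Measure ℝ) : Prop where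
  prob : IsProbabilityMeasure P
  lam_pos : 0 < lam
  mu_pos : 0 < mu
  sigma_pos : 0 < σ
  sigma_le_one : σ ≤ 1
  f_meas : Measurable f
  f_nonneg : ∀ z, 0 ≤ f z
  f_prob : ∫ z, f z = 1
  M_meas : ∀ A : Set ℝ, MeasurableSet A → Measurable fun ω => M ω A
  N_meas : ∀ B : Set ℝ, MeasurableSet B → Measurable fun ω => N ω B
  M_carrier : ∀ ω, M ω (Set.Icc (0:ℝ) 1)ᶜ = 0
  M_finite : ∀ ω, IsFiniteMeasure (M ω)
  N_locFinite : ∀ ω (B : Set ℝ), Bornology.IsBounded B → N ω B < ⊤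
  laplace : ∀ g h : ℝ → ℝ, Measurable g → Measurable h →
    (∃ c, ∀ x, |g x| ≤ c) → (∃ c, ∀ y, |h y| ≤ c) →
    (∃ R, ∀ y : ℝ, R < |y| → h y = 0) →
    ∫ ω, Real.exp ((∫ x, g x ∂(M ω)) + ∫ y, h y ∂(N ω)) ∂P
      = Real.exp ((n : ℝ) * lam * ∫ x in Set.Icc (0:ℝ) 1,
          (Real.exp (g x + mu * ∫ y, (Real.exp (h y) - 1) * fdil σ f (y - x)) - 1))

/-- `Q_σ(A,B) = ∫_A ∫_B f_σ(y−x) dy dx`. -/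
def Qker (σ : ℝ) (f : ℝ → ℝ) (A B : Set ℝ) : ℝ := ∫ x in A, ∫ y in B, fdil σ f (y - x)

/-- `Q²_σ(A,B₁,B₂) = ∫_A ∫_{B₁} ∫_{B₂} f_σ(y₁−x) f_σ(y₂−x) dy₂ dy₁ dx`. -/
def Q2ker (σ : ℝ) (f : ℝ → ℝ) (A B₁ B₂ : Set ℝ) : ℝ :=
  ∫ x in A, ∫ y₁ in B₁, ∫ y₂ in B₂, fdil σ f (y₁ - x) * fdil σ f (y₂ - x)

end

/-!
Evaluating the Laplace functional at `h = -s • 1_B` gives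
`E exp (-s N(B)) = exp (n λ ∫₀¹ (exp ((e^{-s} - 1) μ q_B(x)) - 1) dx)` with
`q_B(x) = ∫_B f_σ(y - x) dy`. The moments are read off as `s → 0⁺`: pointwise,
`(1 - e^{-sX}) / s` and `(1 - e^{-sX}) (1 - e^{-sY}) / s²` converge to `X` and `XY` from below, so
Fatou's lemma identifies `E X` and `E[XY]` with the limits of the matching combinations of Laplace
transforms. For disjoint `B₁, B₂` the transform of `X + Y = N(B₁ ∪ B₂)` is again of the above form
with `q_{B₁} + q_{B₂}`, and expanding `exp (u (a + b)) - 1 = (e^{ua} - 1) + (e^{ub} - 1)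
+ (e^{ua} - 1)(e^{ub} - 1)` produces the covariance term `n λ μ² ∫ q_{B₁} q_{B₂}`; the limits are
evaluated by dominated convergence.
-/

open Real Topology

section LaplaceMoments

variable {Ω : Type*} [MeasurableSpace Ω] {P : Measure Ω}

theorem integral_eq_of_tendsto_integral_of_le {ι : Type*} {l : Filter ι}
    [l.IsCountablyGenerated] [l.NeBot] {Z : Ω → ℝ} {g : ι → Ω → ℝ} {L : ℝ}
    (hZ : AEStronglyMeasurable Z P) (hg : ∀ i, AEStronglyMeasurable (g i) P)
    (hg_int : ∀ᶠ i in l, Integrable (g i) P) (hg_nonneg : ∀ᶠ i in l, 0 ≤ g i)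
    (hg_le : ∀ᶠ i in l, g i ≤ Z) (hg_lim : ∀ ω, Tendsto (g · ω) l (𝓝 (Z ω)))
    (hL : Tendsto (fun i => ∫ ω, g i ω ∂P) l (𝓝 L)) :
    ∫ ω, Z ω ∂P = L := by
  have hZ_nonneg : 0 ≤ Z := fun ω => ge_of_tendsto (hg_lim ω) (hg_nonneg.mono fun i h => h ω)
  have hL_nonneg : 0 ≤ L := ge_of_tendsto hL (hg_nonneg.mono fun i h => integral_nonneg h)
  have hlim : Tendsto (fun i => ∫⁻ ω, ENNReal.ofReal (g i ω) ∂P) l (𝓝 (ENNReal.ofReal L)) :=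
    (ENNReal.tendsto_ofReal hL).congr' <| (hg_int.and hg_nonneg).mono fun i h =>
      ofReal_integral_eq_lintegral_ofReal h.1 (ae_of_all _ h.2)
  have hupper : ∫⁻ ω, ENNReal.ofReal (Z ω) ∂P ≤ ENNReal.ofReal L := calc
    ∫⁻ ω, ENNReal.ofReal (Z ω) ∂P = ∫⁻ ω, liminf (fun i => ENNReal.ofReal (g i ω)) l ∂P :=
      lintegral_congr fun ω => ((ENNReal.tendsto_ofReal (hg_lim ω)).liminf_eq).symm
    _ ≤ liminf (fun i => ∫⁻ ω, ENNReal.ofReal (g i ω) ∂P) l :=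
      lintegral_liminf_le' fun i => (hg i).aemeasurable.ennreal_ofReal
    _ = ENNReal.ofReal L := hlim.liminf_eq
  have hlower : ENNReal.ofReal L ≤ ∫⁻ ω, ENNReal.ofReal (Z ω) ∂P :=
    le_of_tendsto hlim <| hg_le.mono fun i h =>
      lintegral_mono fun ω => ENNReal.ofReal_le_ofReal (h ω)
  rw [integral_eq_lintegral_of_nonneg_ae (ae_of_all _ hZ_nonneg) hZ,
    le_antisymm hupper hlower, ENNReal.toReal_ofReal hL_nonneg]

theorem integrable_exp_neg [IsFiniteMeasure P] {F : Ω → ℝ} (hF : Measurable F) (hF0 : 0 ≤ F) :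
    Integrable (fun ω => exp (-F ω)) P :=
  (integrable_const 1).mono' (by fun_prop) <| ae_of_all _ fun ω => by
    rw [norm_of_nonneg (exp_nonneg _), exp_le_one_iff, neg_nonpos]
    exact hF0 ω

theorem one_sub_exp_neg_mul_div_nonneg {s x : ℝ} (hs : 0 < s) (hx : 0 ≤ x) :
    0 ≤ (1 - exp (-(s * x))) / s :=
  div_nonneg (sub_nonneg.2 (exp_le_one_iff.2 (by nlinarith))) hs.le

theorem one_sub_exp_neg_mul_div_le {s : ℝ} (hs : 0 < s) (x : ℝ) :
    (1 - exp (-(s * x))) / s ≤ x := by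
  rw [div_le_iff₀ hs]
  linarith [add_one_le_exp (-(s * x))]

theorem tendsto_one_sub_exp_neg_mul_div (x : ℝ) :
    Tendsto (fun s => (1 - exp (-(s * x))) / s) (𝓝[>] 0) (𝓝 x) := by
  have hderiv : HasDerivAt (fun s => exp (-(s * x))) (-x) 0 := by
    simpa using ((hasDerivAt_id (0 : ℝ)).mul_const x).neg.exp
  have hslope := hderiv.tendsto_slope_zero_right.neg
  rw [neg_neg] at hslope
  refine hslope.congr fun s => ?_
  simp only [zero_add, zero_mul, neg_zero, exp_zero, smul_eq_mul]
  ring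

variable [IsProbabilityMeasure P]

theorem integral_eq_of_tendsto_laplace {X : Ω → ℝ} (hX : Measurable X) (hX0 : 0 ≤ X) {m : ℝ}
    (h : Tendsto (fun s => (1 - ∫ ω, exp (-(s * X ω)) ∂P) / s) (𝓝[>] 0) (𝓝 m)) :
    ∫ ω, X ω ∂P = m := by
  have hpos : ∀ᶠ s in 𝓝[>] (0 : ℝ), 0 < s := self_mem_nhdsWithin
  have hint : ∀ s, 0 < s → Integrable (fun ω => exp (-(s * X ω))) P := fun s hs =>
    integrable_exp_neg (by fun_prop) fun ω => mul_nonneg hs.le (hX0 ω)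
  refine integral_eq_of_tendsto_integral_of_le (g := fun s ω => (1 - exp (-(s * X ω))) / s)
    hX.aestronglyMeasurable (fun s => by fun_prop)
    (hpos.mono fun s hs => ((integrable_const 1).sub (hint s hs)).div_const s)
    (hpos.mono fun s hs ω => one_sub_exp_neg_mul_div_nonneg hs (hX0 ω))
    (hpos.mono fun s hs ω => one_sub_exp_neg_mul_div_le hs (X ω))
    (fun ω => tendsto_one_sub_exp_neg_mul_div (X ω)) (h.congr' ?_)
  filter_upwards [hpos] with s hs
  rw [integral_div, integral_sub (integrable_const 1) (hint s hs), integral_const, probReal_univ,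
    one_smul]

theorem integral_mul_eq_of_tendsto_laplace {X Y : Ω → ℝ} (hX : Measurable X) (hY : Measurable Y)
    (hX0 : 0 ≤ X) (hY0 : 0 ≤ Y) {c : ℝ}
    (h : Tendsto (fun s => (1 - ∫ ω, exp (-(s * X ω)) ∂P - ∫ ω, exp (-(s * Y ω)) ∂P
      + ∫ ω, exp (-(s * (X ω + Y ω))) ∂P) / s ^ 2) (𝓝[>] 0) (𝓝 c)) :
    ∫ ω, X ω * Y ω ∂P = c := by
  have hpos : ∀ᶠ s in 𝓝[>] (0 : ℝ), 0 < s := self_mem_nhdsWithin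
  have hint : ∀ {F : Ω → ℝ}, Measurable F → 0 ≤ F → ∀ s, 0 < s →
      Integrable (fun ω => exp (-(s * F ω))) P := fun hF hF0 s hs =>
    integrable_exp_neg (by fun_prop) fun ω => mul_nonneg hs.le (hF0 ω)
  have hXY0 : 0 ≤ fun ω => X ω + Y ω := fun ω => add_nonneg (hX0 ω) (hY0 ω)
  have hexpand : ∀ s ω, (1 - exp (-(s * X ω))) / s * ((1 - exp (-(s * Y ω))) / s)
      = (1 - exp (-(s * X ω)) - exp (-(s * Y ω)) + exp (-(s * (X ω + Y ω)))) / s ^ 2 := by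
    intro s ω
    rw [mul_add, neg_add, exp_add]
    ring
  have hsum : ∀ s, 0 < s →
      Integrable (fun ω => 1 - exp (-(s * X ω)) - exp (-(s * Y ω)) + exp (-(s * (X ω + Y ω)))) P ∧
      ∫ ω, (1 - exp (-(s * X ω)) - exp (-(s * Y ω)) + exp (-(s * (X ω + Y ω)))) ∂P
        = 1 - ∫ ω, exp (-(s * X ω)) ∂P - ∫ ω, exp (-(s * Y ω)) ∂P
          + ∫ ω, exp (-(s * (X ω + Y ω))) ∂P := by
    intro s hs
    have i1 : Integrable (fun ω => 1 - exp (-(s * X ω))) P :=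
      (integrable_const 1).sub (hint hX hX0 s hs)
    have i2 : Integrable (fun ω => 1 - exp (-(s * X ω)) - exp (-(s * Y ω))) P :=
      i1.sub (hint hY hY0 s hs)
    have i3 := hint (F := fun ω => X ω + Y ω) (by fun_prop) hXY0 s hs
    refine ⟨i2.add i3, ?_⟩
    rw [integral_add i2 i3, integral_sub i1 (hint hY hY0 s hs),
      integral_sub (integrable_const 1) (hint hX hX0 s hs), integral_const, probReal_univ,
      one_smul]
  refine integral_eq_of_tendsto_integral_of_le
    (g := fun s ω => (1 - exp (-(s * X ω))) / s * ((1 - exp (-(s * Y ω))) / s))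
    (hX.mul hY).aestronglyMeasurable (fun s => by fun_prop) ?_
    (hpos.mono fun s hs ω => mul_nonneg (one_sub_exp_neg_mul_div_nonneg hs (hX0 ω))
      (one_sub_exp_neg_mul_div_nonneg hs (hY0 ω)))
    (hpos.mono fun s hs ω => mul_le_mul (one_sub_exp_neg_mul_div_le hs (X ω))
      (one_sub_exp_neg_mul_div_le hs (Y ω)) (one_sub_exp_neg_mul_div_nonneg hs (hY0 ω)) (hX0 ω))
    (fun ω => (tendsto_one_sub_exp_neg_mul_div (X ω)).mul (tendsto_one_sub_exp_neg_mul_div (Y ω)))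
    (h.congr' ?_)
  · filter_upwards [hpos] with s hs
    simp_rw [hexpand]
    exact (hsum s hs).1.div_const _
  · filter_upwards [hpos] with s hs
    simp_rw [hexpand]
    rw [integral_div, (hsum s hs).2]

end LaplaceMoments

section ExpLimits

variable {ι : Type*} {l : Filter ι} {r ε : ι → ℝ} {m : ℝ}

theorem tendsto_zero_of_tendsto_div (h : Tendsto (fun i => r i / ε i) l (𝓝 m))
    (hε : Tendsto ε l (𝓝 0)) (hε0 : ∀ᶠ i in l, ε i ≠ 0) : Tendsto r l (𝓝 0) := by
  have := h.mul hε
  rw [mul_zero] at this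
  exact this.congr' <| hε0.mono fun i hi => div_mul_cancel₀ (r i) hi

theorem tendsto_exp_sub_one_div (h : Tendsto (fun i => r i / ε i) l (𝓝 m))
    (hε : Tendsto ε l (𝓝 0)) (hε0 : ∀ᶠ i in l, ε i ≠ 0) :
    Tendsto (fun i => (exp (r i) - 1) / ε i) l (𝓝 m) := by
  have hr := tendsto_zero_of_tendsto_div h hε hε0
  have hr_abs : Tendsto (fun i => |r i|) l (𝓝 0) := by simpa using hr.abs
  have hrem : Tendsto (fun i => (exp (r i) - 1 - r i) / ε i) l (𝓝 0) := by
    refine squeeze_zero_norm' ?_ (by simpa using h.abs.mul hr_abs)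
    filter_upwards [hr_abs.eventually_le_const one_pos] with i hi
    calc ‖(exp (r i) - 1 - r i) / ε i‖ = |exp (r i) - 1 - r i| / |ε i| := by
          rw [norm_div, Real.norm_eq_abs, Real.norm_eq_abs]
      _ ≤ r i ^ 2 / |ε i| := by gcongr; exact abs_exp_sub_one_sub_id_le hi
      _ = |r i / ε i| * |r i| := by rw [abs_div, div_mul_eq_mul_div, abs_mul_abs_self, sq]
  simpa [sub_div] using h.add hrem

end ExpLimits

section ClusterExponent

variable {α : Type*} [MeasurableSpace α] {ν : Measure α} {a b : α → ℝ} {C : ℝ}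

/-- `exp ((exp (-s) - 1) * a x)` is the Laplace transform at `s` of a Poisson variable of mean
`a x`, so `exp (c * clusterExponent ν a s)` is the Laplace transform of the total count of a
cluster process with Poisson parents of intensity `c • ν` and Poisson(`a x`) offspring at `x`. -/
noncomputable def clusterExponent (ν : Measure α) (a : α → ℝ) (s : ℝ) : ℝ :=
  ∫ x, (exp ((exp (-s) - 1) * a x) - 1) ∂ν

theorem abs_exp_mul_exp_neg_sub_one_sub_one_le_one {s c : ℝ} (hs : 0 ≤ s) (hc : 0 ≤ c) :
    |exp ((exp (-s) - 1) * c) - 1| ≤ 1 := by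
  have hle : exp ((exp (-s) - 1) * c) ≤ 1 :=
    exp_le_one_iff.2 (mul_nonpos_of_nonpos_of_nonneg (by simp [hs]) hc)
  rw [abs_of_nonpos (by linarith)]
  linarith [exp_pos ((exp (-s) - 1) * c)]

theorem abs_exp_mul_exp_neg_sub_one_sub_one_div_le {s c : ℝ} (hs : 0 < s) (hc : 0 ≤ c) :
    |(exp ((exp (-s) - 1) * c) - 1) / s| ≤ c := by
  have hu : -s ≤ exp (-s) - 1 := by linarith [add_one_le_exp (-s)]
  have hle : exp ((exp (-s) - 1) * c) ≤ 1 :=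
    exp_le_one_iff.2 (mul_nonpos_of_nonpos_of_nonneg (by simp [hs.le]) hc)
  rw [abs_div, abs_of_pos hs, abs_of_nonpos (by linarith), div_le_iff₀ hs]
  nlinarith [add_one_le_exp ((exp (-s) - 1) * c)]

theorem tendsto_exp_mul_exp_neg_sub_one_sub_one_div (c : ℝ) :
    Tendsto (fun s => (exp ((exp (-s) - 1) * c) - 1) / s) (𝓝[>] 0) (𝓝 (-c)) := by
  have hderiv : HasDerivAt (fun s => exp ((exp (-s) - 1) * c)) (-c) 0 := by
    simpa using (((hasDerivAt_neg (0 : ℝ)).exp.sub_const 1).mul_const c).exp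
  refine hderiv.tendsto_slope_zero_right.congr fun s => ?_
  simp only [zero_add, neg_zero, exp_zero, sub_self, zero_mul, smul_eq_mul]
  ring

theorem integrable_exp_mul_exp_neg_sub_one_sub_one [IsFiniteMeasure ν] (ha : Measurable a)
    (ha0 : ∀ x, 0 ≤ a x) {s : ℝ} (hs : 0 ≤ s) :
    Integrable (fun x => exp ((exp (-s) - 1) * a x) - 1) ν :=
  (integrable_const 1).mono' (by fun_prop) <| ae_of_all _ fun x =>
    abs_exp_mul_exp_neg_sub_one_sub_one_le_one hs (ha0 x)

theorem clusterExponent_add [IsFiniteMeasure ν] (ha : Measurable a) (hb : Measurable b)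
    (ha0 : ∀ x, 0 ≤ a x) (hb0 : ∀ x, 0 ≤ b x) {s : ℝ} (hs : 0 ≤ s) :
    clusterExponent ν (fun x => a x + b x) s = clusterExponent ν a s + clusterExponent ν b s
      + ∫ x, (exp ((exp (-s) - 1) * a x) - 1) * (exp ((exp (-s) - 1) * b x) - 1) ∂ν := by
  have hia := integrable_exp_mul_exp_neg_sub_one_sub_one ha ha0 hs (ν := ν)
  have hib := integrable_exp_mul_exp_neg_sub_one_sub_one hb hb0 hs (ν := ν)
  have hiab : Integrable (fun x =>
      (exp ((exp (-s) - 1) * a x) - 1) * (exp ((exp (-s) - 1) * b x) - 1)) ν :=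
    (integrable_const 1).mono' (by fun_prop) <| ae_of_all _ fun x => by
      rw [norm_mul]
      exact mul_le_one₀ (abs_exp_mul_exp_neg_sub_one_sub_one_le_one hs (ha0 x)) (abs_nonneg _)
        (abs_exp_mul_exp_neg_sub_one_sub_one_le_one hs (hb0 x))
  have hia_add_ib : Integrable (fun x =>
      (exp ((exp (-s) - 1) * a x) - 1) + (exp ((exp (-s) - 1) * b x) - 1)) ν := hia.add hib
  rw [clusterExponent, clusterExponent, clusterExponent, ← integral_add hia hib,
    ← integral_add hia_add_ib hiab]
  congr 1 with x
  rw [mul_add, exp_add]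
  ring

theorem tendsto_clusterExponent_div [IsFiniteMeasure ν] (ha : Measurable a)
    (ha0 : ∀ x, 0 ≤ a x) (haC : ∀ x, a x ≤ C) :
    Tendsto (fun s => clusterExponent ν a s / s) (𝓝[>] 0) (𝓝 (-∫ x, a x ∂ν)) := by
  simp_rw [clusterExponent, ← integral_div, ← integral_neg]
  refine tendsto_integral_filter_of_dominated_convergence (fun _ => C)
    (Eventually.of_forall fun s => by fun_prop) ?_ (integrable_const C)
    (ae_of_all _ fun x => tendsto_exp_mul_exp_neg_sub_one_sub_one_div (a x))
  filter_upwards [self_mem_nhdsWithin] with s (hs : 0 < s)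
  exact ae_of_all _ fun x =>
    (abs_exp_mul_exp_neg_sub_one_sub_one_div_le hs (ha0 x)).trans (haC x)

theorem tendsto_integral_exp_mul_exp_neg_sub_one_sub_one_mul_div_sq [IsFiniteMeasure ν]
    (ha : Measurable a) (hb : Measurable b) (ha0 : ∀ x, 0 ≤ a x) (hb0 : ∀ x, 0 ≤ b x)
    (haC : ∀ x, a x ≤ C) (hbC : ∀ x, b x ≤ C) :
    Tendsto (fun s => (∫ x, (exp ((exp (-s) - 1) * a x) - 1)
      * (exp ((exp (-s) - 1) * b x) - 1) ∂ν) / s ^ 2) (𝓝[>] 0) (𝓝 (∫ x, a x * b x ∂ν)) := by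
  have hsplit : ∀ s x, (exp ((exp (-s) - 1) * a x) - 1) * (exp ((exp (-s) - 1) * b x) - 1) / s ^ 2
      = (exp ((exp (-s) - 1) * a x) - 1) / s * ((exp ((exp (-s) - 1) * b x) - 1) / s) :=
    fun s x => by ring
  simp_rw [← integral_div, hsplit]
  refine tendsto_integral_filter_of_dominated_convergence (fun _ => C * C)
    (Eventually.of_forall fun s => by fun_prop) ?_ (integrable_const _)
    (ae_of_all _ fun x => by
      simpa using (tendsto_exp_mul_exp_neg_sub_one_sub_one_div (a x)).mul
        (tendsto_exp_mul_exp_neg_sub_one_sub_one_div (b x)))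
  filter_upwards [self_mem_nhdsWithin] with s (hs : 0 < s)
  refine ae_of_all _ fun x => ?_
  rw [norm_mul]
  exact mul_le_mul ((abs_exp_mul_exp_neg_sub_one_sub_one_div_le hs (ha0 x)).trans (haC x))
    ((abs_exp_mul_exp_neg_sub_one_sub_one_div_le hs (hb0 x)).trans (hbC x)) (abs_nonneg _)
    ((ha0 x).trans (haC x))

end ClusterExponent

section ClusterMoments

variable {α : Type*} [MeasurableSpace α] {ν : Measure α} [IsFiniteMeasure ν] {a b : α → ℝ} {C : ℝ}

theorem tendsto_id_nhdsGT_zero : Tendsto (fun s : ℝ => s) (𝓝[>] 0) (𝓝 0) :=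
  tendsto_id.mono_left nhdsWithin_le_nhds

theorem eventually_ne_zero_nhdsGT_zero : ∀ᶠ s : ℝ in 𝓝[>] 0, s ≠ 0 :=
  eventually_mem_nhdsWithin.mono fun _ hs => ne_of_gt hs

theorem tendsto_one_sub_exp_mul_clusterExponent_div (ha : Measurable a) (ha0 : ∀ x, 0 ≤ a x)
    (haC : ∀ x, a x ≤ C) (c : ℝ) :
    Tendsto (fun s => (1 - exp (c * clusterExponent ν a s)) / s) (𝓝[>] 0)
      (𝓝 (c * ∫ x, a x ∂ν)) := by
  have h : Tendsto (fun s => c * clusterExponent ν a s / s) (𝓝[>] 0) (𝓝 (-(c * ∫ x, a x ∂ν))) := by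
    simpa [mul_div_assoc] using (tendsto_clusterExponent_div ha ha0 haC).const_mul c
  simpa using (tendsto_exp_sub_one_div h tendsto_id_nhdsGT_zero
    eventually_ne_zero_nhdsGT_zero).neg.congr fun s => by ring

theorem tendsto_clusterExponent_second_difference (ha : Measurable a) (hb : Measurable b)
    (ha0 : ∀ x, 0 ≤ a x) (hb0 : ∀ x, 0 ≤ b x) (haC : ∀ x, a x ≤ C) (hbC : ∀ x, b x ≤ C)
    (c : ℝ) :
    Tendsto (fun s => (1 - exp (c * clusterExponent ν a s) - exp (c * clusterExponent ν b s)
        + exp (c * clusterExponent ν (fun x => a x + b x) s)) / s ^ 2) (𝓝[>] 0)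
      (𝓝 ((c * ∫ x, a x ∂ν) * (c * ∫ x, b x ∂ν) + c * ∫ x, a x * b x ∂ν)) := by
  set J : ℝ → ℝ := fun s =>
    ∫ x, (exp ((exp (-s) - 1) * a x) - 1) * (exp ((exp (-s) - 1) * b x) - 1) ∂ν
  have hA := tendsto_one_sub_exp_mul_clusterExponent_div ha ha0 haC c (ν := ν)
  have hB := tendsto_one_sub_exp_mul_clusterExponent_div hb hb0 hbC c (ν := ν)
  have hone : ∀ {F : ℝ → ℝ} {m : ℝ}, Tendsto (fun s => (1 - F s) / s) (𝓝[>] 0) (𝓝 m) →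
      Tendsto F (𝓝[>] 0) (𝓝 1) := fun h => by
    simpa using (tendsto_zero_of_tendsto_div h tendsto_id_nhdsGT_zero
      eventually_ne_zero_nhdsGT_zero).const_sub 1
  have hsq : Tendsto (fun s : ℝ => s ^ 2) (𝓝[>] 0) (𝓝 0) := by
    simpa using tendsto_id_nhdsGT_zero.pow 2
  have hJ : Tendsto (fun s => (exp (c * J s) - 1) / s ^ 2) (𝓝[>] 0)
      (𝓝 (c * ∫ x, a x * b x ∂ν)) := by
    refine tendsto_exp_sub_one_div ?_ hsq
      (eventually_ne_zero_nhdsGT_zero.mono fun s hs => pow_ne_zero 2 hs)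
    simpa [J, mul_div_assoc] using
      (tendsto_integral_exp_mul_exp_neg_sub_one_sub_one_mul_div_sq ha hb ha0 hb0 haC hbC).const_mul
        c
  have hlim := (hA.mul hB).add (((hone hA).mul (hone hB)).mul hJ)
  rw [one_mul, one_mul] at hlim
  refine hlim.congr' ?_
  filter_upwards [self_mem_nhdsWithin] with s (hs : 0 < s)
  rw [clusterExponent_add ha hb ha0 hb0 hs.le, mul_add, mul_add, exp_add, exp_add]
  ring

end ClusterMoments

section Dilation

variable {σ : ℝ} {f : ℝ → ℝ}

theorem fdil_nonneg (hσ : 0 ≤ σ) (hf : ∀ z, 0 ≤ f z) (z : ℝ) : 0 ≤ fdil σ f z :=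
  mul_nonneg (inv_nonneg.2 hσ) (hf _)

theorem measurable_fdil (hf : Measurable f) : Measurable (fdil σ f) := by
  unfold fdil
  fun_prop

theorem MeasureTheory.Integrable.fdil (hf : Integrable f) (hσ : σ ≠ 0) : Integrable (fdil σ f) :=
  (hf.comp_div hσ).const_mul σ⁻¹

theorem integral_fdil (hσ : 0 < σ) : ∫ z, fdil σ f z = ∫ z, f z := by
  simp only [fdil, integral_const_mul, Measure.integral_comp_div, abs_of_pos hσ, smul_eq_mul,
    inv_mul_cancel_left₀ hσ.ne']

noncomputable def Qmass (σ : ℝ) (f : ℝ → ℝ) (B : Set ℝ) (x : ℝ) : ℝ :=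
  ∫ y in B, fdil σ f (y - x)

theorem Qker_eq_integral_Qmass (A B : Set ℝ) : Qker σ f A B = ∫ x in A, Qmass σ f B x := rfl

theorem Qmass_nonneg (hσ : 0 ≤ σ) (hf : ∀ z, 0 ≤ f z) (B : Set ℝ) (x : ℝ) :
    0 ≤ Qmass σ f B x :=
  integral_nonneg fun _ => fdil_nonneg hσ hf _

theorem Qmass_le_one (hσ : 0 < σ) (hf : ∀ z, 0 ≤ f z) (hf1 : ∫ z, f z = 1) (B : Set ℝ)
    (x : ℝ) : Qmass σ f B x ≤ 1 := by
  have hint : Integrable (fdil σ f) :=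
    (Integrable.of_integral_ne_zero (f := f) (by simp [hf1])).fdil hσ.ne'
  calc Qmass σ f B x ≤ ∫ y, fdil σ f (y - x) :=
        setIntegral_le_integral (hint.comp_sub_right x)
          (ae_of_all _ fun _ => fdil_nonneg hσ.le hf _)
    _ = 1 := by rw [integral_sub_right_eq_self, integral_fdil hσ, hf1]

theorem measurable_Qmass (hf : Measurable f) (B : Set ℝ) : Measurable (Qmass σ f B) :=
  (((measurable_fdil hf).comp (measurable_snd.sub measurable_fst)).stronglyMeasurable
    |>.integral_prod_right' (f := fun p : ℝ × ℝ => fdil σ f (p.2 - p.1))).measurable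

theorem Qmass_union (hσ : σ ≠ 0) (hf : Integrable f) {B₁ B₂ : Set ℝ} (hd : Disjoint B₁ B₂)
    (hB₂ : MeasurableSet B₂) (x : ℝ) :
    Qmass σ f (B₁ ∪ B₂) x = Qmass σ f B₁ x + Qmass σ f B₂ x :=
  setIntegral_union hd hB₂ ((hf.fdil hσ).comp_sub_right x).integrableOn
    ((hf.fdil hσ).comp_sub_right x).integrableOn

theorem Q2ker_eq_integral_Qmass_mul (A B₁ B₂ : Set ℝ) :
    Q2ker σ f A B₁ B₂ = ∫ x in A, Qmass σ f B₁ x * Qmass σ f B₂ x := by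
  refine integral_congr_ae (ae_of_all _ fun x => ?_)
  simp only [Qmass, integral_const_mul, integral_mul_const]

end Dilation

namespace IsDispersalModel

variable {Ω : Type*} [MeasurableSpace Ω] {P : Measure Ω} {n : ℕ} {lam mu σ : ℝ} {f : ℝ → ℝ}
  {M N : Ω → Measure ℝ}

theorem integral_exp_neg_mul_count (model : IsDispersalModel P n lam mu σ f M N) {B : Set ℝ}
    (hB : MeasurableSet B) (hBb : Bornology.IsBounded B) (s : ℝ) :
    ∫ ω, exp (-(s * (N ω B).toReal)) ∂P
      = exp (n * lam *
          clusterExponent (volume.restrict (Icc 0 1)) (fun x => mu * Qmass σ f B x) s) := by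
  obtain ⟨R, hR⟩ := hBb.subset_closedBall 0
  have hlap := model.laplace (fun _ => 0) (B.indicator fun _ => -s) measurable_const
    (measurable_const.indicator hB) ⟨0, by simp⟩
    ⟨|s|, fun y => by by_cases hy : y ∈ B <;> simp [hy]⟩
    ⟨R, fun y hy => indicator_of_notMem (fun hyB => by
      have := hR hyB
      rw [Metric.mem_closedBall, Real.dist_eq, sub_zero] at this
      linarith) _⟩
  have hinner : ∀ x, ∫ y, (exp (B.indicator (fun _ => -s) y) - 1) * fdil σ f (y - x)
      = (exp (-s) - 1) * Qmass σ f B x := fun x => by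
    rw [Qmass, ← integral_const_mul, ← integral_indicator hB]
    congr 1 with y
    by_cases hy : y ∈ B <;> simp [hy]
  simp only [integral_zero, zero_add, integral_indicator_const _ hB, measureReal_def,
    smul_eq_mul, hinner] at hlap
  rw [clusterExponent]
  convert hlap using 4 with ω
  · ring
  · ext x
    rw [mul_left_comm]

theorem mu_mul_Qmass_nonneg (model : IsDispersalModel P n lam mu σ f M N) (B : Set ℝ) (x : ℝ) :
    0 ≤ mu * Qmass σ f B x :=
  mul_nonneg model.mu_pos.le (Qmass_nonneg model.sigma_pos.le model.f_nonneg B x)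

theorem mu_mul_Qmass_le (model : IsDispersalModel P n lam mu σ f M N) (B : Set ℝ) (x : ℝ) :
    mu * Qmass σ f B x ≤ mu :=
  mul_le_of_le_one_right model.mu_pos.le
    (Qmass_le_one model.sigma_pos model.f_nonneg model.f_prob B x)

theorem integral_count (model : IsDispersalModel P n lam mu σ f M N) {B : Set ℝ}
    (hB : MeasurableSet B) (hBb : Bornology.IsBounded B) :
    ∫ ω, (N ω B).toReal ∂P = n * lam * mu * Qker σ f (Icc 0 1) B := by
  have := model.prob
  have hlim := tendsto_one_sub_exp_mul_clusterExponent_div (ν := volume.restrict (Icc 0 1))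
    ((measurable_Qmass model.f_meas B).const_mul mu) (model.mu_mul_Qmass_nonneg B)
    (model.mu_mul_Qmass_le B) (n * lam)
  simp_rw [← model.integral_exp_neg_mul_count hB hBb] at hlim
  rw [integral_eq_of_tendsto_laplace (model.N_meas B hB).ennreal_toReal
    (fun _ => ENNReal.toReal_nonneg) hlim, integral_const_mul, Qker_eq_integral_Qmass]
  ring

theorem integral_count_mul_count (model : IsDispersalModel P n lam mu σ f M N) {B₁ B₂ : Set ℝ}
    (hB₁ : MeasurableSet B₁) (hB₂ : MeasurableSet B₂) (hB₁b : Bornology.IsBounded B₁)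
    (hB₂b : Bornology.IsBounded B₂) (hd : Disjoint B₁ B₂) :
    ∫ ω, (N ω B₁).toReal * (N ω B₂).toReal ∂P
      = n * lam * mu * Qker σ f (Icc 0 1) B₁ * (n * lam * mu * Qker σ f (Icc 0 1) B₂)
        + n * lam * mu ^ 2 * Q2ker σ f (Icc 0 1) B₁ B₂ := by
  have := model.prob
  have hlim := tendsto_clusterExponent_second_difference (ν := volume.restrict (Icc 0 1))
    ((measurable_Qmass model.f_meas B₁).const_mul mu)
    ((measurable_Qmass model.f_meas B₂).const_mul mu)
    (model.mu_mul_Qmass_nonneg B₁) (model.mu_mul_Qmass_nonneg B₂)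
    (model.mu_mul_Qmass_le B₁) (model.mu_mul_Qmass_le B₂) (n * lam)
  have hunion : (fun x => mu * Qmass σ f B₁ x + mu * Qmass σ f B₂ x)
      = fun x => mu * Qmass σ f (B₁ ∪ B₂) x := by
    ext x
    rw [Qmass_union model.sigma_pos.ne' (Integrable.of_integral_ne_zero (by simp [model.f_prob]))
      hd hB₂ x, mul_add]
  have hcount : ∀ ω, (N ω (B₁ ∪ B₂)).toReal = (N ω B₁).toReal + (N ω B₂).toReal := fun ω => by
    rw [measure_union hd hB₂, ENNReal.toReal_add (model.N_locFinite ω B₁ hB₁b).ne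
      (model.N_locFinite ω B₂ hB₂b).ne]
  simp_rw [hunion, ← model.integral_exp_neg_mul_count hB₁ hB₁b,
    ← model.integral_exp_neg_mul_count hB₂ hB₂b,
    ← model.integral_exp_neg_mul_count (hB₁.union hB₂) (hB₁b.union hB₂b), hcount] at hlim
  have hmean : ∀ B, ∫ x in Icc 0 1, mu * Qmass σ f B x = mu * Qker σ f (Icc 0 1) B := fun B => by
    rw [integral_const_mul, Qker_eq_integral_Qmass]
  have hcov : ∫ x in Icc 0 1, mu * Qmass σ f B₁ x * (mu * Qmass σ f B₂ x)
      = mu ^ 2 * Q2ker σ f (Icc 0 1) B₁ B₂ := by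
    rw [Q2ker_eq_integral_Qmass_mul, ← integral_const_mul]
    congr 1 with x
    ring
  rw [integral_mul_eq_of_tendsto_laplace (model.N_meas B₁ hB₁).ennreal_toReal
    (model.N_meas B₂ hB₂).ennreal_toReal (fun _ => ENNReal.toReal_nonneg)
    (fun _ => ENNReal.toReal_nonneg) hlim, hmean, hmean, hcov]
  ring

end IsDispersalModel

theorem dispersal_second_moment_NN_general
    {Ω : Type*} [MeasurableSpace Ω] (P : Measure Ω)
    (n : ℕ) (lam mu σ : ℝ) (f : ℝ → ℝ) (M N : Ω → Measure ℝ)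
    (model : IsDispersalModel P n lam mu σ f M N)
    (B₁ B₂ : Set ℝ) (hB₁meas : MeasurableSet B₁) (hB₂meas : MeasurableSet B₂)
    (hB₁bdd : Bornology.IsBounded B₁) (hB₂bdd : Bornology.IsBounded B₂)
    (hdisj : Disjoint B₁ B₂) :
    (∫ ω, (N ω B₁).toReal * (N ω B₂).toReal ∂P
        = (n : ℝ)^2 * lam^2 * mu^2 * Qker σ f (Set.Icc (0:ℝ) 1) B₁
            * Qker σ f (Set.Icc (0:ℝ) 1) B₂
          + (n : ℝ) * lam * mu^2 * Q2ker σ f (Set.Icc (0:ℝ) 1) B₁ B₂)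
    ∧ (∫ ω, (N ω B₁).toReal * (N ω B₂).toReal ∂P
        = (∫ ω, (N ω B₁).toReal ∂P) * (∫ ω, (N ω B₂).toReal ∂P)
          + (n : ℝ) * lam * mu^2 * Q2ker σ f (Set.Icc (0:ℝ) 1) B₁ B₂)
    ∧ (∀ B : Set ℝ, MeasurableSet B → Bornology.IsBounded B →
        ∫ ω, (N ω B).toReal ∂P = (n : ℝ) * lam * mu * Qker σ f (Set.Icc (0:ℝ) 1) B) := by
  have hcov := model.integral_count_mul_count hB₁meas hB₂meas hB₁bdd hB₂bdd hdisj
  refine ⟨by rw [hcov]; ring, ?_, fun B hB hBb => model.integral_count hB hBb⟩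
  rw [hcov, model.integral_count hB₁meas hB₁bdd, model.integral_count hB₂meas hB₂bdd]

/-- Lemma 16(i): second moment of `N` on disjoint bounded intervals. -/
theorem dispersal_second_moment_NN
    {Ω : Type*} [MeasurableSpace Ω] (P : Measure Ω)
    (n : ℕ) (lam mu σ : ℝ) (f : ℝ → ℝ) (M N : Ω → Measure ℝ)
    (model : IsDispersalModel P n lam mu σ f M N)
    (B₁ B₂ : Set ℝ) (hB₁meas : MeasurableSet B₁) (hB₂meas : MeasurableSet B₂)
    (hB₁int : B₁.OrdConnected) (hB₂int : B₂.OrdConnected)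
    (hB₁bdd : Bornology.IsBounded B₁) (hB₂bdd : Bornology.IsBounded B₂)
    (hdisj : Disjoint B₁ B₂) :
    (∫ ω, (N ω B₁).toReal * (N ω B₂).toReal ∂P
        = (n : ℝ)^2 * lam^2 * mu^2 * Qker σ f (Set.Icc (0:ℝ) 1) B₁
            * Qker σ f (Set.Icc (0:ℝ) 1) B₂
          + (n : ℝ) * lam * mu^2 * Q2ker σ f (Set.Icc (0:ℝ) 1) B₁ B₂)
    ∧ (∫ ω, (N ω B₁).toReal * (N ω B₂).toReal ∂P
        = (∫ ω, (N ω B₁).toReal ∂P) * (∫ ω, (N ω B₂).toReal ∂P)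
          + (n : ℝ) * lam * mu^2 * Q2ker σ f (Set.Icc (0:ℝ) 1) B₁ B₂)
    ∧ (∀ B : Set ℝ, MeasurableSet B → Bornology.IsBounded B →
        ∫ ω, (N ω B).toReal ∂P = (n : ℝ) * lam * mu * Qker σ f (Set.Icc (0:ℝ) 1) B) :=
  dispersal_second_moment_NN_general P n lam mu σ f M N model B₁ B₂ hB₁meas hB₂meas hB₁bdd hB₂bdd
    hdisj
end

section
/- If supp f ⊆ [−1/2,1/2], then for every i = 1,…,n and every σ ∈ (0,1], the probability that the nearest parent of Y_i is not its true parent satisfies P(X_i ≠ X_{(i)}) ≤ σn. -/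
open MeasureTheory Filter Set ProbabilityTheory

noncomputable section

/-- The i.i.d. dispersal model: `X₁,…,X_n` i.i.d. uniform on `[0,1]`, `D₁,…,D_n` i.i.d.
with density `f`, all `2n` variables jointly independent; the children are
`Y_i = X_i + σ D_i`. -/
structure IsIIDModel {Ω : Type*} [MeasurableSpace Ω] (P : Measure Ω)
    (n : ℕ) (σ : ℝ) (f : ℝ → ℝ) (X D : Fin n → Ω → ℝ) : Prop where
  prob : IsProbabilityMeasure P
  sigma_pos : 0 < σ
  sigma_le_one : σ ≤ 1
  f_meas : Measurable f
  f_nonneg : ∀ z, 0 ≤ f z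
  f_prob : ∫ z, f z = 1
  X_meas : ∀ i, Measurable (X i)
  D_meas : ∀ i, Measurable (D i)
  lawX : ∀ i, Measure.map (X i) P = volume.restrict (Set.Icc (0:ℝ) 1)
  lawD : ∀ i, Measure.map (D i) P = volume.withDensity fun z => ENNReal.ofReal (f z)
  indep : iIndepFun (m := fun _ : Fin n ⊕ Fin n => Real.measurableSpace) (Sum.elim X D) P

/-- The children `Y_i = X_i + σ D_i`. -/
def Ychild {Ω : Type*} {n : ℕ} (σ : ℝ) (X D : Fin n → Ω → ℝ) (i : Fin n) (ω : Ω) : ℝ :=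
  X i ω + σ * D i ω

/-- `Xnear` is a nearest-parent selection: `Xnear i` takes values among the parents and
minimizes the distance to the child `Y_i`. -/
def IsNearestParent {Ω : Type*} [MeasurableSpace Ω] {n : ℕ} (σ : ℝ) (X D Xnear : Fin n → Ω → ℝ) : Prop :=
  (∀ i, Measurable (Xnear i)) ∧
  (∀ (i : Fin n) (ω : Ω), ∃ j, Xnear i ω = X j ω) ∧
  (∀ (i j : Fin n) (ω : Ω), |Ychild σ X D i ω - Xnear i ω| ≤ |Ychild σ X D i ω - X j ω|)

end

/-!
Off a null event, `|D_i| ≤ 1/2`, so the true parent lies within `σ/2` of `Y_i`. A mismatch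
therefore forces some other parent `X_j` into the window `[Y_i - σ/2, Y_i + σ/2]`. Since
`X_j` is uniform and independent of `Y_i`, this has probability at most `σ`, and a union
bound over the `n - 1` other parents concludes.
-/

section

variable {Ω : Type*} [MeasurableSpace Ω] {P : Measure Ω}

theorem ae_abs_le_of_map_eq_withDensity {Z : Ω → ℝ} (hZ : Measurable Z) {f : ℝ → ℝ}
    (hf : Measurable f) (hlaw : P.map Z = volume.withDensity fun z => ENNReal.ofReal (f z))
    {a : ℝ} (hsupp : ∀ z, z ∉ Icc (-a) a → f z = 0) :
    ∀ᵐ ω ∂P, |Z ω| ≤ a := by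
  refine ae_of_ae_map (p := fun z => |z| ≤ a) hZ.aemeasurable ?_
  rw [hlaw, ae_withDensity_iff hf.ennreal_ofReal]
  refine Eventually.of_forall fun z hz => abs_le.mpr ?_
  by_contra hout
  exact hz (by simp [hsupp z hout])

theorem measure_abs_sub_le_le_of_indepFun [IsProbabilityMeasure P] {Y X : Ω → ℝ}
    (hY : Measurable Y) (hX : Measurable X) (hind : IndepFun Y X P)
    (hlaw : P.map X ≤ volume) (r : ℝ) :
    P {ω | |Y ω - X ω| ≤ r} ≤ ENNReal.ofReal (2 * r) := by
  have hS : MeasurableSet {p : ℝ × ℝ | |p.1 - p.2| ≤ r} :=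
    measurableSet_le (by fun_prop) measurable_const
  have hslice (y : ℝ) : Prod.mk y ⁻¹' {p : ℝ × ℝ | |p.1 - p.2| ≤ r} = Icc (y - r) (y + r) := by
    ext x
    simp only [mem_preimage, mem_ofPred_eq, mem_Icc, abs_sub_le_iff]
    constructor <;> rintro ⟨h₁, h₂⟩ <;> constructor <;> linarith
  have hIcc (y : ℝ) : P.map X (Icc (y - r) (y + r)) ≤ ENNReal.ofReal (2 * r) :=
    (hlaw _).trans_eq (by rw [Real.volume_Icc]; ring_nf)
  have := Measure.isProbabilityMeasure_map (μ := P) hY.aemeasurable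
  calc P {ω | |Y ω - X ω| ≤ r}
      = P.map (fun ω => (Y ω, X ω)) {p | |p.1 - p.2| ≤ r} :=
        (Measure.map_apply (hY.prodMk hX) hS).symm
    _ = ∫⁻ y, P.map X (Icc (y - r) (y + r)) ∂P.map Y := by
        rw [(indepFun_iff_map_prod_eq_prod_map_map hY.aemeasurable hX.aemeasurable).mp hind,
          Measure.prod_apply hS]
        simp only [hslice]
    _ ≤ ∫⁻ _, ENNReal.ofReal (2 * r) ∂P.map Y := lintegral_mono hIcc
    _ = ENNReal.ofReal (2 * r) := by simp

variable {n : ℕ} {σ : ℝ} {X D Xnear : Fin n → Ω → ℝ}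

theorem IsNearestParent.exists_ne_abs_sub_le (hnear : IsNearestParent σ X D Xnear) (hσ : 0 ≤ σ)
    {i : Fin n} {ω : Ω} {a : ℝ} (hD : |D i ω| ≤ a) (hne : X i ω ≠ Xnear i ω) :
    ∃ j ≠ i, |Ychild σ X D i ω - X j ω| ≤ σ * a := by
  obtain ⟨j, hj⟩ := hnear.2.1 i ω
  refine ⟨j, fun hji => hne (hji ▸ hj.symm), ?_⟩
  calc |Ychild σ X D i ω - X j ω| = |Ychild σ X D i ω - Xnear i ω| := by rw [hj]
    _ ≤ |Ychild σ X D i ω - X i ω| := hnear.2.2 i i ω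
    _ = σ * |D i ω| := by simp [Ychild, abs_mul, abs_of_nonneg hσ]
    _ ≤ σ * a := mul_le_mul_of_nonneg_left hD hσ

theorem IsIIDModel.indepFun_ychild {f : ℝ → ℝ} (model : IsIIDModel P n σ f X D) {i j : Fin n}
    (hji : j ≠ i) : IndepFun (Ychild σ X D i) (X j) P := by
  have hmeas : ∀ k, Measurable (Sum.elim X D k) := by
    rintro (k | k)
    exacts [model.X_meas k, model.D_meas k]
  have hpair : IndepFun (fun ω => (X i ω, D i ω)) (X j) P :=
    model.indep.indepFun_prodMk hmeas (Sum.inl i) (Sum.inr i) (Sum.inl j)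
      (by simpa using hji.symm) (by simp)
  exact hpair.comp (measurable_fst.add (measurable_snd.const_mul σ)) measurable_id

end

/-- Lemma 10: probability of a nearest-parent mismatch. -/
theorem nearest_parent_mismatch
    {Ω : Type*} [MeasurableSpace Ω] (P : Measure Ω)
    (n : ℕ) (σ : ℝ) (f : ℝ → ℝ) (X D : Fin n → Ω → ℝ)
    (model : IsIIDModel P n σ f X D)
    (hsupp : ∀ z, z ∉ Set.Icc (-(1/2) : ℝ) (1/2) → f z = 0)
    (Xnear : Fin n → Ω → ℝ) (hnear : IsNearestParent σ X D Xnear)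
    (i : Fin n) :
    (P {ω | X i ω ≠ Xnear i ω}).toReal ≤ σ * n := by
  have := model.prob
  have hσ := model.sigma_pos.le
  set E : Fin n → Set Ω := fun j => {ω | |Ychild σ X D i ω - X j ω| ≤ σ * (1 / 2)}
  have hE (j : Fin n) (hji : j ≠ i) : P (E j) ≤ ENNReal.ofReal σ := by
    have h := measure_abs_sub_le_le_of_indepFun
      ((model.X_meas i).add ((model.D_meas i).const_mul σ)) (model.X_meas j)
      (model.indepFun_ychild hji) ((model.lawX j).trans_le Measure.restrict_le_self) (σ * (1 / 2))
    rwa [show 2 * (σ * (1 / 2)) = σ by ring] at h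
  have hmismatch : {ω | X i ω ≠ Xnear i ω} ≤ᵐ[P] ⋃ j ∈ Finset.univ.erase i, E j := by
    filter_upwards [ae_abs_le_of_map_eq_withDensity (model.D_meas i) model.f_meas
      (model.lawD i) hsupp] with ω hD hne
    obtain ⟨j, hji, hj⟩ := hnear.exists_ne_abs_sub_le hσ hD hne
    exact mem_biUnion (Finset.mem_erase.mpr ⟨hji, Finset.mem_univ j⟩) hj
  refine ENNReal.toReal_le_of_le_ofReal (by positivity) ?_
  calc P {ω | X i ω ≠ Xnear i ω} ≤ ∑ j ∈ Finset.univ.erase i, P (E j) :=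
        (measure_mono_ae hmismatch).trans (measure_biUnion_finset_le _ _)
    _ ≤ ∑ _j ∈ Finset.univ.erase i, ENNReal.ofReal σ :=
        Finset.sum_le_sum fun j hj => hE j (Finset.ne_of_mem_erase hj)
    _ ≤ n * ENNReal.ofReal σ := by
        rw [Finset.sum_const, nsmul_eq_mul]
        gcongr
        exact_mod_cast (Finset.card_erase_le).trans_eq (Finset.card_fin n)
    _ = ENNReal.ofReal (σ * n) := by
        rw [ENNReal.ofReal_mul hσ, ENNReal.ofReal_natCast, mul_comm]
end

section
/- Assume E[|D₁|] < ∞. Then there is a constant C depending only on E[|D₁|] such that for all n ∈ ℕ, all σ ∈ (0,1] and all z ∈ [0, 1/(2σ)), the distribution function H(z) := P(σ⁻¹|Y₁ − X_{(1)}| ≤ z) of the normalized distance to the nearest parent satisfies | H(z) − ( 1 − (1 − G(z))(1 − 2σz)^{n−1} ) | ≤ C σ (z + 1). -/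
open MeasureTheory Filter Set ProbabilityTheory

open scoped ENNReal

/-!
The event `σ⁻¹ |Y₁ - X₍₁₎| ≤ z` is the complement of "`|D₁| > z` and every other parent lies
farther than `σ z` from `Y₁`". The other parents are i.i.d. uniform and independent of
`(X₁, D₁)`, so conditionally on `(X₁, D₁) = (x, d)` this event has probability exactly
`1{|d| > z} (1 - 2σz)^(n-1)` as soon as `Y₁ = x + σ d` lies in `[σz, 1 - σz]`. The remaining
boundary strip is hit with probability at most `2σ(z + E|D₁|)`, which is the error term.
-/

local notation "𝒰" => volume.restrict (Icc (0 : ℝ) 1)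

instance isProbabilityMeasure_uniform : IsProbabilityMeasure 𝒰 := ⟨by simp⟩

lemma ENNReal.abs_toReal_sub_le_of_le_add {a b c : ℝ≥0∞} (ha : a ≠ ⊤) (hb : b ≠ ⊤) (hc : c ≠ ⊤)
    (hab : a ≤ b + c) (hba : b ≤ a + c) : |a.toReal - b.toReal| ≤ c.toReal := by
  have h₁ := ENNReal.toReal_mono (ENNReal.add_ne_top.mpr ⟨hb, hc⟩) hab
  have h₂ := ENNReal.toReal_mono (ENNReal.add_ne_top.mpr ⟨ha, hc⟩) hba
  rw [ENNReal.toReal_add hb hc] at h₁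
  rw [ENNReal.toReal_add ha hc] at h₂
  exact abs_sub_le_iff.mpr ⟨by linarith, by linarith⟩

section Comparison

variable {α : Type*} [MeasurableSpace α] {μ : Measure α} {f g : α → ℝ≥0∞} {s : Set α}

lemma lintegral_le_lintegral_add_measure_of_eqOn_compl (hs : MeasurableSet s)
    (hf : ∀ x, f x ≤ 1) (hfg : EqOn f g sᶜ) : ∫⁻ x, f x ∂μ ≤ ∫⁻ x, g x ∂μ + μ s := by
  rw [← lintegral_indicator_one hs, ← lintegral_add_right _ (measurable_one.indicator hs)]
  refine lintegral_mono fun x => ?_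
  by_cases hx : x ∈ s
  · simpa [hx] using (hf x).trans le_add_self
  · simp [hx, hfg hx]

lemma abs_toReal_lintegral_sub_le_of_eqOn_compl [IsFiniteMeasure μ] (hs : MeasurableSet s)
    (hf : ∀ x, f x ≤ 1) (hg : ∀ x, g x ≤ 1) (hfg : EqOn f g sᶜ) :
    |(∫⁻ x, f x ∂μ).toReal - (∫⁻ x, g x ∂μ).toReal| ≤ (μ s).toReal := by
  have hfin : ∀ {h : α → ℝ≥0∞}, (∀ x, h x ≤ 1) → ∫⁻ x, h x ∂μ ≠ ⊤ := fun hh =>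
    ((lintegral_mono hh).trans_lt (by simp [measure_lt_top])).ne
  exact ENNReal.abs_toReal_sub_le_of_le_add (hfin hf) (hfin hg) (measure_ne_top μ s)
    (lintegral_le_lintegral_add_measure_of_eqOn_compl hs hf hfg)
    (lintegral_le_lintegral_add_measure_of_eqOn_compl hs hg hfg.symm)

end Comparison

lemma toReal_map_setOf_lt_abs {Ω : Type*} [MeasurableSpace Ω] {P : Measure Ω}
    [IsProbabilityMeasure P] {Y : Ω → ℝ} (hY : Measurable Y) {z : ℝ} :
    (P.map Y {y | z < |y|}).toReal = 1 - (P {ω | |Y ω| ≤ z}).toReal := by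
  rw [Measure.map_apply hY (measurableSet_lt measurable_const measurable_abs), ← measureReal_def,
    ← measureReal_def, ← probReal_compl_eq_one_sub (measurableSet_le hY.abs measurable_const)]
  simp [compl_ofPred]

lemma uniform_setOf_lt_abs_sub {r y : ℝ} (hr : 0 ≤ r) (hy₀ : r ≤ y) (hy₁ : y ≤ 1 - r) :
    𝒰 {t | r < |y - t|} = ENNReal.ofReal (1 - 2 * r) := by
  have hset : {t | r < |y - t|} = (Metric.closedBall y r)ᶜ := by
    ext t; simp [Real.dist_eq, abs_sub_comm]
  rw [hset, prob_compl_eq_one_sub Metric.isClosed_closedBall.measurableSet, Real.closedBall_eq_Icc,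
    Measure.restrict_apply measurableSet_Icc,
    inter_eq_left.mpr (Icc_subset_Icc (by linarith) (by linarith)), Real.volume_Icc,
    ← ENNReal.ofReal_one, ← ENNReal.ofReal_sub _ (by linarith)]
  ring_nf

lemma uniform_Iio_le (a : ℝ) : 𝒰 (Iio a) ≤ ENNReal.ofReal a := by
  rw [Measure.restrict_apply measurableSet_Iio]
  calc volume (Iio a ∩ Icc 0 1) ≤ volume (Ico 0 a) :=
        measure_mono fun x hx => ⟨hx.2.1, hx.1⟩
    _ = ENNReal.ofReal a := by simp

lemma uniform_Ioi_le (b : ℝ) :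
    𝒰 (Ioi b) ≤ ENNReal.ofReal (1 - b) := by
  rw [Measure.restrict_apply measurableSet_Ioi]
  calc volume (Ioi b ∩ Icc 0 1) ≤ volume (Ioc b 1) :=
        measure_mono fun x hx => ⟨hx.1, hx.2.2⟩
    _ = ENNReal.ofReal (1 - b) := Real.volume_Ioc

lemma uniform_boundary_le {r : ℝ} (hr : 0 ≤ r) (c : ℝ) :
    𝒰 {x | x + c < r ∨ 1 - r < x + c}
      ≤ ENNReal.ofReal (2 * (r + |c|)) := by
  have hsub : {x | x + c < r ∨ 1 - r < x + c} ⊆ Iio (r - c) ∪ Ioi (1 - r - c) := by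
    rintro x (hx | hx)
    exacts [Or.inl (by simp only [mem_Iio]; linarith), Or.inr (by simp only [mem_Ioi]; linarith)]
  calc _ ≤ 𝒰 (Iio (r - c) ∪ Ioi (1 - r - c)) := measure_mono hsub
    _ ≤ ENNReal.ofReal (r - c) + ENNReal.ofReal (1 - (1 - r - c)) :=
        (measure_union_le _ _).trans (add_le_add (uniform_Iio_le _) (uniform_Ioi_le _))
    _ ≤ ENNReal.ofReal (r + |c|) + ENNReal.ofReal (r + |c|) := by
        gcongr
        · linarith [neg_abs_le c]
        · linarith [le_abs_self c]
    _ = ENNReal.ofReal (2 * (r + |c|)) := by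
        rw [← ENNReal.ofReal_add (by positivity) (by positivity), two_mul]

lemma uniform_prod_boundary_le {ν : Measure ℝ} [IsProbabilityMeasure ν]
    (hν : Integrable (fun d => |d|) ν) {a r : ℝ} (ha : 0 ≤ a) (hr : 0 ≤ r) :
    (𝒰).prod ν {v | v.1 + a * v.2 < r ∨ 1 - r < v.1 + a * v.2}
      ≤ ENNReal.ofReal (2 * r + 2 * a * ∫ d, |d| ∂ν) := by
  have hmeas : MeasurableSet {v : ℝ × ℝ | v.1 + a * v.2 < r ∨ 1 - r < v.1 + a * v.2} := by
    measurability
  rw [Measure.prod_apply_symm hmeas]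
  calc ∫⁻ d, 𝒰 ((fun x => (x, d)) ⁻¹' _) ∂ν
      ≤ ∫⁻ d, ENNReal.ofReal (2 * r) + ENNReal.ofReal (2 * a) * ENNReal.ofReal |d| ∂ν := by
        refine lintegral_mono fun d => (uniform_boundary_le hr (a * d)).trans_eq ?_
        rw [abs_mul, abs_of_nonneg ha, ← ENNReal.ofReal_mul (by positivity),
          ← ENNReal.ofReal_add (by positivity) (by positivity)]
        ring_nf
    _ = ENNReal.ofReal (2 * r + 2 * a * ∫ d, |d| ∂ν) := by
        rw [lintegral_add_left measurable_const,
          lintegral_const_mul _ measurable_abs.ennreal_ofReal,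
          ← ofReal_integral_eq_lintegral_ofReal hν (ae_of_all _ fun d => abs_nonneg d),
          lintegral_const, measure_univ, mul_one, ← ENNReal.ofReal_mul (by positivity),
          ← ENNReal.ofReal_add (by positivity) (by positivity), mul_assoc]

-- `p = ((x, d), w)`: a child at `x + a * d` with own parent `x` and other parents `w j`.
def noParentWithin (a r z : ℝ) (ι : Type*) : Set ((ℝ × ℝ) × (ι → ℝ)) :=
  {p | z < |p.1.2| ∧ ∀ j, r < |p.1.1 + a * p.1.2 - p.2 j|}

section NoParentWithin

variable {ι : Type*} [Fintype ι] {a r z : ℝ}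

lemma measurableSet_noParentWithin : MeasurableSet (noParentWithin a r z ι) := by
  unfold noParentWithin
  simp only [ofPred_and, ofPred_forall]
  exact (measurableSet_lt measurable_const (by fun_prop)).inter
    (.iInter fun j => measurableSet_lt measurable_const (by fun_prop))

lemma pi_preimage_prodMk_noParentWithin (hr : 0 ≤ r) {v : ℝ × ℝ} (hv₀ : r ≤ v.1 + a * v.2)
    (hv₁ : v.1 + a * v.2 ≤ 1 - r) :
    Measure.pi (fun _ : ι => 𝒰) (Prod.mk v ⁻¹' noParentWithin a r z ι)
      = {v : ℝ × ℝ | z < |v.2|}.indicator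
          (fun _ => ENNReal.ofReal (1 - 2 * r) ^ Fintype.card ι) v := by
  by_cases hv : z < |v.2|
  · have hbox : Prod.mk v ⁻¹' noParentWithin a r z ι
        = univ.pi fun _ => {t | r < |v.1 + a * v.2 - t|} := by
      ext w; simp [noParentWithin, hv]
    rw [hbox, Measure.pi_pi, Finset.prod_const, Finset.card_univ,
      uniform_setOf_lt_abs_sub hr hv₀ hv₁, indicator_of_mem (by exact hv)]
  · have hempty : Prod.mk v ⁻¹' noParentWithin a r z ι = ∅ := by
      ext w; simp [noParentWithin, hv]
    rw [hempty, measure_empty, indicator_of_notMem (by exact hv)]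

lemma abs_prod_pi_noParentWithin_sub_le (ν : Measure ℝ) [IsProbabilityMeasure ν]
    (hν : Integrable (fun d => |d|) ν) (ha : 0 ≤ a) (hr : 0 ≤ r) (hr₁ : 2 * r ≤ 1) :
    |(((𝒰).prod ν).prod (Measure.pi fun _ : ι => 𝒰) (noParentWithin a r z ι)).toReal
      - (ν {d | z < |d|}).toReal * (1 - 2 * r) ^ Fintype.card ι|
      ≤ 2 * r + 2 * a * ∫ d, |d| ∂ν := by
  set boundary := {v : ℝ × ℝ | v.1 + a * v.2 < r ∨ 1 - r < v.1 + a * v.2}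
  set far := {v : ℝ × ℝ | z < |v.2|}
  have hfar : MeasurableSet far := measurableSet_lt measurable_const measurable_snd.abs
  set c := ENNReal.ofReal (1 - 2 * r) ^ Fintype.card ι
  have hc : c ≤ 1 := pow_le_one' (ENNReal.ofReal_le_one.mpr (by linarith)) _
  have hlimit : ∫⁻ v, far.indicator (fun _ => c) v ∂((𝒰).prod ν) = ν {d | z < |d|} * c := by
    rw [lintegral_indicator hfar, setLIntegral_const,
      show far = univ ×ˢ {d | z < |d|} by ext; simp [far],
      Measure.prod_prod, measure_univ, one_mul, mul_comm]
  have hcompare := abs_toReal_lintegral_sub_le_of_eqOn_compl (μ := (𝒰).prod ν)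
    (f := fun v => Measure.pi (fun _ : ι => 𝒰) (Prod.mk v ⁻¹' noParentWithin a r z ι))
    (g := far.indicator fun _ => c) (s := boundary) (by measurability) (fun _ => prob_le_one)
    (fun _ => indicator_apply_le' (fun _ => hc) (fun _ => zero_le))
    (fun v hv => by
      simp only [boundary, mem_compl_iff, mem_ofPred_eq, not_or, not_lt] at hv
      exact pi_preimage_prodMk_noParentWithin hr hv.1 hv.2)
  rw [← Measure.prod_apply measurableSet_noParentWithin, hlimit, ENNReal.toReal_mul,
    ENNReal.toReal_pow, ENNReal.toReal_ofReal (by linarith)] at hcompare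
  exact hcompare.trans (ENNReal.toReal_le_of_le_ofReal (by positivity)
    (uniform_prod_boundary_le hν ha hr))

end NoParentWithin

section Model

variable {Ω : Type*} [MeasurableSpace Ω] {P : Measure Ω} {n : ℕ} {σ : ℝ} {f : ℝ → ℝ}
  {X D : Fin n → Ω → ℝ}

lemma IsIIDModel.indepFun_pair_others (h : IsIIDModel P n σ f X D) (i : Fin n) :
    IndepFun (fun ω => (X i ω, D i ω)) (fun ω (j : {j // j ≠ i}) => X j ω) P := by
  classical
  let pair : Finset (Fin n ⊕ Fin n) := {.inl i, .inr i}
  let others : Finset (Fin n ⊕ Fin n) := Finset.univ.image fun j : {j // j ≠ i} => .inl j.1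
  have hdisj : Disjoint pair others := by
    simp only [pair, others, Finset.disjoint_left, Finset.mem_insert, Finset.mem_singleton,
      Finset.mem_image, Finset.mem_univ, true_and]
    rintro _ (rfl | rfl) ⟨j, hj⟩
    exacts [j.2 (Sum.inl_injective hj), Sum.inl_ne_inr hj]
  have hmeas : ∀ k, Measurable (Sum.elim X D k) := Sum.rec h.X_meas h.D_meas
  have hφ : Measurable fun g : pair → ℝ =>
      (g ⟨.inl i, by simp [pair]⟩, g ⟨.inr i, by simp [pair]⟩) :=
    (measurable_pi_apply _).prodMk (measurable_pi_apply _)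
  have hψ : Measurable fun (g : others → ℝ) (j : {j // j ≠ i}) =>
      g ⟨.inl j.1, Finset.mem_image_of_mem _ (Finset.mem_univ j)⟩ :=
    measurable_pi_lambda _ fun _ => measurable_pi_apply _
  exact (h.indep.indepFun_finset pair others hdisj hmeas).comp hφ hψ

lemma IsIIDModel.map_pair (h : IsIIDModel P n σ f X D) (i : Fin n) :
    P.map (fun ω => (X i ω, D i ω)) = (𝒰).prod (P.map (D i)) := by
  have := h.prob
  rw [(indepFun_iff_map_prod_eq_prod_map_map (h.X_meas i).aemeasurable
    (h.D_meas i).aemeasurable).mp (h.indep.indepFun Sum.inl_ne_inr), h.lawX]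

lemma IsIIDModel.map_others (h : IsIIDModel P n σ f X D) (i : Fin n) :
    P.map (fun ω (j : {j // j ≠ i}) => X j ω) = Measure.pi fun _ => 𝒰 := by
  have : IsProbabilityMeasure P := h.prob
  have hindep := h.indep.precomp (g := fun j : {j // j ≠ i} => Sum.inl j.1)
    fun j k hjk => Subtype.ext (Sum.inl_injective hjk)
  simpa only [Sum.elim_inl, h.lawX] using
    hindep.map_fun_eq_pi_map fun (j : {j // j ≠ i}) => (h.X_meas j.1).aemeasurable

lemma IsIIDModel.measurable_pair_others (h : IsIIDModel P n σ f X D) (i : Fin n) :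
    Measurable fun ω => ((X i ω, D i ω), fun j : {j // j ≠ i} => X j ω) :=
  ((h.X_meas i).prodMk (h.D_meas i)).prodMk (measurable_pi_lambda _ fun j => h.X_meas j.1)

lemma IsIIDModel.map_pair_others (h : IsIIDModel P n σ f X D) (i : Fin n) :
    P.map (fun ω => ((X i ω, D i ω), fun j : {j // j ≠ i} => X j ω))
      = ((𝒰).prod (P.map (D i))).prod (Measure.pi fun _ => 𝒰) := by
  have := h.prob
  rw [(indepFun_iff_map_prod_eq_prod_map_map (h.measurable_pair_others i).fst.aemeasurable
    (h.measurable_pair_others i).snd.aemeasurable).mp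
    (h.indepFun_pair_others i), h.map_pair, h.map_others]

end Model

section NearestParent

variable {Ω : Type*} [MeasurableSpace Ω] {n : ℕ} {σ : ℝ} {X D Xnear : Fin n → Ω → ℝ}

lemma IsNearestParent.inv_mul_abs_sub_le_iff (hNear : IsNearestParent σ X D Xnear) (hσ : 0 < σ)
    (i : Fin n) (ω : Ω) (z : ℝ) :
    σ⁻¹ * |Ychild σ X D i ω - Xnear i ω| ≤ z ↔ ∃ j, |Ychild σ X D i ω - X j ω| ≤ σ * z := by
  rw [inv_mul_le_iff₀ hσ]
  refine ⟨fun hle => ?_, fun ⟨j, hj⟩ => (hNear.2.2 i j ω).trans hj⟩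
  obtain ⟨j, hj⟩ := hNear.2.1 i ω
  exact ⟨j, hj ▸ hle⟩

lemma IsNearestParent.setOf_inv_mul_abs_sub_le (hNear : IsNearestParent σ X D Xnear) (hσ : 0 < σ)
    (i : Fin n) (z : ℝ) :
    {ω | σ⁻¹ * |Ychild σ X D i ω - Xnear i ω| ≤ z}
      = (fun ω => ((X i ω, D i ω), fun j : {j // j ≠ i} => X j ω)) ⁻¹'
          (noParentWithin σ (σ * z) z {j // j ≠ i})ᶜ := by
  have hown : ∀ ω, |Ychild σ X D i ω - X i ω| ≤ σ * z ↔ |D i ω| ≤ z := fun ω => by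
    rw [Ychild, add_sub_cancel_left, abs_mul, abs_of_pos hσ, mul_le_mul_iff_right₀ hσ]
  ext ω
  simp only [mem_ofPred_eq, hNear.inv_mul_abs_sub_le_iff hσ, mem_preimage, noParentWithin,
    mem_compl_iff, not_and_or, not_lt, not_forall, Subtype.exists]
  constructor
  · rintro ⟨j, hj⟩
    by_cases hji : j = i
    · exact .inl ((hown ω).mp (hji ▸ hj))
    · exact .inr ⟨j, hji, hj⟩
  · rintro (hD | ⟨j, -, hj⟩)
    exacts [⟨i, (hown ω).mpr hD⟩, ⟨j, hj⟩]

end NearestParent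

/-- (Lemma 12: Brown's relation between the distribution function `H` of
the normalized distance to the nearest parent and the dispersal-distance distribution
function `G`, with a constant depending only on `E[|D₁|]`). -/
theorem brown_relation (m : ℝ) :
    ∃ C : ℝ, 0 < C ∧
      ∀ (Ω : Type) (_ : MeasurableSpace Ω) (P : Measure Ω)
        (n : ℕ) (hn : 0 < n) (σ : ℝ) (f : ℝ → ℝ) (X D : Fin n → Ω → ℝ),
        IsIIDModel P n σ f X D →
        Integrable (fun ω => |D ⟨0, hn⟩ ω|) P →
        (∫ ω, |D ⟨0, hn⟩ ω| ∂P) = m →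
        ∀ (Xnear : Fin n → Ω → ℝ), IsNearestParent σ X D Xnear →
        ∀ z : ℝ, z ∈ Set.Ico (0 : ℝ) (1 / (2 * σ)) →
          |(P {ω | σ⁻¹ * |Ychild σ X D ⟨0, hn⟩ ω - Xnear ⟨0, hn⟩ ω| ≤ z}).toReal
              - (1 - (1 - (P {ω | |D ⟨0, hn⟩ ω| ≤ z}).toReal) * (1 - 2 * σ * z) ^ (n - 1))|
            ≤ C * σ * (z + 1) := by
  refine ⟨2 + 2 * |m|, by positivity, ?_⟩
  rintro Ω _ P n hn σ f X D hM hInt hm Xnear hNear z ⟨hz₀, hz₁⟩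
  have := hM.prob
  have hσ := hM.sigma_pos
  set i : Fin n := ⟨0, hn⟩
  have hDi := hM.D_meas i
  have hr₁ : 2 * (σ * z) ≤ 1 := by
    rw [lt_div_iff₀ (by positivity)] at hz₁; linarith
  have := Measure.isProbabilityMeasure_map (μ := P) hDi.aemeasurable
  have hν : Integrable (fun d => |d|) (P.map (D i)) :=
    (integrable_map_measure measurable_abs.aestronglyMeasurable hDi.aemeasurable).mpr hInt
  have hbound := abs_prod_pi_noParentWithin_sub_le (ι := {j // j ≠ i}) (z := z) _ hν hσ.le
    (by positivity) hr₁
  have hcard : Fintype.card {j // j ≠ i} = n - 1 := by simp [Fintype.card_subtype_compl]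
  rw [← hM.map_pair_others i, Measure.map_apply (hM.measurable_pair_others i)
    measurableSet_noParentWithin, integral_map hDi.aemeasurable
    measurable_abs.aestronglyMeasurable, toReal_map_setOf_lt_abs hDi, hcard, ← mul_assoc, hm] at hbound
  rw [hNear.setOf_inv_mul_abs_sub_le hσ, preimage_compl, ← measureReal_def,
    probReal_compl_eq_one_sub (measurableSet_noParentWithin.preimage (hM.measurable_pair_others i)),
    measureReal_def, sub_sub_sub_cancel_left, abs_sub_comm]
  calc _ ≤ 2 * σ * z + 2 * σ * m := hbound
    _ ≤ (2 + 2 * |m|) * σ * (z + 1) := by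
      nlinarith [mul_le_mul_of_nonneg_left (le_abs_self m) hσ.le,
        mul_nonneg (mul_nonneg hσ.le hz₀) (abs_nonneg m)]
end

section
/- Assume E[|D₁|] < ∞ and fix z ≥ 0. Then the counting estimator Ĝ_n(z) := n⁻¹ Σ_{i,j=1}^n 1{ |X_j − Y_i| ≤ σz } − 2σ(n−1)z satisfies Var( Ĝ_n(z) ) ≤ C ( 1/n + σ + σ²n ), uniformly in n ∈ ℕ and σ ∈ (0,1], where C depends only on z and the distribution of D₁. -/
open MeasureTheory Filter Set ProbabilityTheory

/-!
The estimator is `n⁻¹ S` minus a constant, where `S = ∑ i j, 1_{nearEvent i j}` counts the pairs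
whose child `Y i` lies within `σ z` of the parent `X j`; hence its variance is
`n⁻² ∑ cov(1_{nearEvent i j}, 1_{nearEvent k l})`. Indicators of disjoint index pairs are
independent. For the others everything rests on one fact: a uniform parent `X j` falls into an
interval of length `2 σ z` chosen by the other variables with probability at most `2 σ z`, even
jointly with an event determined by those variables. So the covariance is at most `1` on the `n`
quadruples `i = j = k = l`, at most `2 σ z` when the pairs share two indices (`O(n²)` quadruples)
and at most `8 (σ z)²` when they share one (`O(n³)` quadruples), whence
`Var ≤ n⁻² (n + 12 σ z n² + 32 (σ z)² n³)`.
-/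

section General

variable {Ω : Type*} {mΩ : MeasurableSpace Ω} {P : Measure Ω}

lemma covariance_indicator_one [IsProbabilityMeasure P] {A B : Set Ω}
    (hA : MeasurableSet A) (hB : MeasurableSet B) :
    cov[A.indicator 1, B.indicator 1; P] = P.real (A ∩ B) - P.real A * P.real B := by
  have hA' : MemLp (A.indicator (1 : Ω → ℝ)) 2 P := (memLp_const 1).indicator hA
  have hB' : MemLp (B.indicator (1 : Ω → ℝ)) 2 P := (memLp_const 1).indicator hB
  rw [covariance_eq_sub hA' hB', ← inter_indicator_one, integral_indicator_one (hA.inter hB),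
    integral_indicator_one hA, integral_indicator_one hB]

lemma measure_preimage_inter_abs_sub_le_of_indepFun [IsFiniteMeasure P]
    {E : Type*} [MeasurableSpace E] {U : Ω → E} {V : Ω → ℝ}
    (hU : Measurable U) (hV : Measurable V) (hUV : IndepFun U V P) (hlaw : P.map V ≤ volume)
    {g : E → ℝ} (hg : Measurable g) {s : Set E} (hs : MeasurableSet s) (r : ℝ) :
    P (U ⁻¹' s ∩ {ω | |V ω - g (U ω)| ≤ r}) ≤ ENNReal.ofReal (2 * r) * P (U ⁻¹' s) := by
  set T : Set (E × ℝ) := {p | p.1 ∈ s ∧ |p.2 - g p.1| ≤ r}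
  have hT : MeasurableSet T :=
    (measurable_fst hs).inter (measurableSet_le (measurable_snd.sub (hg.comp measurable_fst)).abs
      measurable_const)
  have hslice (e : E) :
      (P.map V) (Prod.mk e ⁻¹' T) ≤ s.indicator (fun _ ↦ ENNReal.ofReal (2 * r)) e := by
    by_cases he : e ∈ s
    · have hIcc : Prod.mk e ⁻¹' T = Icc (g e - r) (g e + r) := by
        ext v; simp [T, he, abs_le, add_comm]
      rw [indicator_of_mem he, hIcc]
      calc (P.map V) (Icc (g e - r) (g e + r)) ≤ volume (Icc (g e - r) (g e + r)) := hlaw _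
        _ = ENNReal.ofReal (2 * r) := by rw [Real.volume_Icc]; ring_nf
    · have hempty : Prod.mk e ⁻¹' T = ∅ := by ext v; simp [T, he]
      simp [hempty]
  calc P (U ⁻¹' s ∩ {ω | |V ω - g (U ω)| ≤ r})
      = ((P.map U).prod (P.map V)) T := by
        rw [← (indepFun_iff_map_prod_eq_prod_map_map hU.aemeasurable hV.aemeasurable).1 hUV,
          Measure.map_apply (hU.prodMk hV) hT]
        rfl
    _ = ∫⁻ e, (P.map V) (Prod.mk e ⁻¹' T) ∂(P.map U) := Measure.prod_apply hT
    _ ≤ ∫⁻ e, s.indicator (fun _ ↦ ENNReal.ofReal (2 * r)) e ∂(P.map U) := lintegral_mono hslice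
    _ = ENNReal.ofReal (2 * r) * P (U ⁻¹' s) := by
        rw [lintegral_indicator_const hs, Measure.map_apply hU hs]

lemma measure_inter_abs_sub_le_of_indep {Ω : Type*} {m mΩ : MeasurableSpace Ω} {P : Measure Ω}
    [IsFiniteMeasure P] (hm : m ≤ mΩ) {V W : Ω → ℝ} (hV : Measurable V)
    (hind : Indep m (.comap V inferInstance) P) (hlaw : P.map V ≤ volume) (hW : Measurable[m] W)
    {B : Set Ω} (hB : MeasurableSet[m] B) (r : ℝ) :
    P (B ∩ {ω | |V ω - W ω| ≤ r}) ≤ ENNReal.ofReal (2 * r) * P B := by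
  have hU : Measurable[m] fun ω ↦ (W ω, ω ∈ B) :=
    hW.prodMk ((@measurableSet_setOfPred Ω m _).1 hB)
  have hUV : IndepFun (fun ω ↦ (W ω, ω ∈ B)) V P :=
    (IndepFun_iff_Indep _ _ _).2 (indep_of_indep_of_le_left hind (measurable_iff_comap_le.1 hU))
  exact measure_preimage_inter_abs_sub_le_of_indepFun (hU.mono hm le_rfl) hV hUV hlaw
    measurable_fst (measurableSet_setOfPred.2 measurable_snd) r

end General

section Weight

variable {ι : Type*} [DecidableEq ι]

def sharedTwo (i j k l : ι) : ℕ :=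
  (if i = j ∧ k = i then 1 else 0) + (if i = j ∧ l = i then 1 else 0)
    + (if k = l ∧ i = k then 1 else 0) + (if k = l ∧ j = k then 1 else 0)
    + (if k = i ∧ l = j then 1 else 0) + (if k = j ∧ l = i then 1 else 0)

def sharedOne (i j k l : ι) : ℕ :=
  (if k = i then 1 else 0) + (if k = j then 1 else 0) + (if l = i then 1 else 0)
    + (if l = j then 1 else 0)

/-- Bound for the covariance of the indicators of `nearEvent i j` and `nearEvent k l`: `1` if all
four indices agree, plus `a` per way the two pairs share two indices and `b` per shared index. -/
def pairWeight (a b : ℝ) (i j k l : ι) : ℝ :=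
  (if i = j ∧ k = i ∧ l = i then 1 else 0) + a * sharedTwo i j k l + b * sharedOne i j k l

variable {a b : ℝ} {i j k l : ι}

lemma pairWeight_nonneg (ha : 0 ≤ a) (hb : 0 ≤ b) : 0 ≤ pairWeight a b i j k l := by
  unfold pairWeight; positivity

lemma one_le_pairWeight (ha : 0 ≤ a) (hb : 0 ≤ b) (hj : i = j) (hk : k = i) (hl : l = i) :
    1 ≤ pairWeight a b i j k l := by
  unfold pairWeight
  rw [if_pos ⟨hj, hk, hl⟩]
  have : 0 ≤ a * sharedTwo i j k l + b * sharedOne i j k l := by positivity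
  linarith

lemma le_pairWeight_of_sharedTwo (ha : 0 ≤ a) (hb : 0 ≤ b)
    (h : i = j ∧ (k = i ∨ l = i) ∨ k = l ∧ (i = k ∨ j = k) ∨ k = i ∧ l = j ∨ k = j ∧ l = i) :
    a ≤ pairWeight a b i j k l := by
  have h₂ : 1 ≤ sharedTwo i j k l := by
    unfold sharedTwo
    rcases h with ⟨rfl, rfl | rfl⟩ | ⟨rfl, rfl | rfl⟩ | ⟨rfl, rfl⟩ | ⟨rfl, rfl⟩ <;> simp <;> omega
  calc a = a * (1 : ℕ) := by simp
    _ ≤ a * sharedTwo i j k l := by gcongr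
    _ ≤ pairWeight a b i j k l := by
      unfold pairWeight
      have : 0 ≤ (if i = j ∧ k = i ∧ l = i then (1 : ℝ) else 0) + b * sharedOne i j k l := by
        positivity
      linarith

lemma le_pairWeight_of_sharedOne (ha : 0 ≤ a) (hb : 0 ≤ b) (h : k = i ∨ k = j ∨ l = i ∨ l = j) :
    b ≤ pairWeight a b i j k l := by
  have h₁ : 1 ≤ sharedOne i j k l := by
    unfold sharedOne
    rcases h with rfl | rfl | rfl | rfl <;> simp <;> omega
  calc b = b * (1 : ℕ) := by simp
    _ ≤ b * sharedOne i j k l := by gcongr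
    _ ≤ pairWeight a b i j k l := by
      unfold pairWeight
      have : 0 ≤ (if i = j ∧ k = i ∧ l = i then (1 : ℝ) else 0) + a * sharedTwo i j k l := by
        positivity
      linarith

lemma sum_pairWeight [Fintype ι] (a b : ℝ) :
    ∑ i : ι, ∑ j, ∑ k, ∑ l, pairWeight a b i j k l
      = Fintype.card ι + 6 * a * Fintype.card ι ^ 2 + 4 * b * Fintype.card ι ^ 3 := by
  simp [pairWeight, sharedTwo, sharedOne, Finset.sum_add_distrib, ← Finset.mul_sum, ite_and,
    Finset.sum_ite_eq, Finset.sum_ite_eq']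
  ring

end Weight

section Model

variable {Ω : Type*} {n : ℕ} {σ z : ℝ} {X D : Fin n → Ω → ℝ}

/-- `Sum.inl i` stands for `X i` and `Sum.inr i` for `D i`, as in `IsIIDModel.indep`. -/
abbrev coordSigmaAlgebra (X D : Fin n → Ω → ℝ) (S : Set (Fin n ⊕ Fin n)) : MeasurableSpace Ω :=
  ⨆ t ∈ S, MeasurableSpace.comap (Sum.elim X D t) inferInstance

def nearEvent (σ z : ℝ) (X D : Fin n → Ω → ℝ) (i j : Fin n) : Set Ω :=
  {ω | |X j ω - Ychild σ X D i ω| ≤ σ * z}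

lemma measurable_coordSigmaAlgebra {S : Set (Fin n ⊕ Fin n)} {t : Fin n ⊕ Fin n} (ht : t ∈ S) :
    Measurable[coordSigmaAlgebra X D S] (Sum.elim X D t) :=
  measurable_iff_comap_le.2
    (le_iSup₂ (f := fun t _ ↦ MeasurableSpace.comap (Sum.elim X D t) _) t ht)

lemma measurable_Ychild_coordSigmaAlgebra {S : Set (Fin n ⊕ Fin n)} {i : Fin n}
    (hX : Sum.inl i ∈ S) (hD : Sum.inr i ∈ S) :
    Measurable[coordSigmaAlgebra X D S] (Ychild σ X D i) :=
  (measurable_coordSigmaAlgebra hX).add ((measurable_coordSigmaAlgebra hD).const_mul σ)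

lemma measurableSet_nearEvent_of_mem {S : Set (Fin n ⊕ Fin n)} {i j : Fin n}
    (hXi : Sum.inl i ∈ S) (hDi : Sum.inr i ∈ S) (hXj : Sum.inl j ∈ S) :
    MeasurableSet[coordSigmaAlgebra X D S] (nearEvent σ z X D i j) :=
  measurableSet_le (measurable_abs.comp ((measurable_coordSigmaAlgebra hXj).sub
    (measurable_Ychild_coordSigmaAlgebra hXi hDi))) measurable_const

lemma measurable_X_coordSigmaAlgebra_compl {j l : Fin n} (hlj : l ≠ j) :
    Measurable[coordSigmaAlgebra X D {Sum.inl j}ᶜ] (X l) :=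
  measurable_coordSigmaAlgebra (t := Sum.inl l) (by simpa using hlj)

lemma measurable_D_coordSigmaAlgebra_compl (j i : Fin n) :
    Measurable[coordSigmaAlgebra X D {Sum.inl j}ᶜ] (D i) :=
  measurable_coordSigmaAlgebra (t := Sum.inr i) (by simp)

lemma measurable_Ychild_coordSigmaAlgebra_compl {i j : Fin n} (hij : i ≠ j) :
    Measurable[coordSigmaAlgebra X D {Sum.inl j}ᶜ] (Ychild σ X D i) :=
  measurable_Ychild_coordSigmaAlgebra (by simpa using hij) (by simp)

lemma measurableSet_nearEvent_coordSigmaAlgebra_compl {i j l : Fin n} (hil : i ≠ l)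
    (hjl : j ≠ l) : MeasurableSet[coordSigmaAlgebra X D {Sum.inl l}ᶜ] (nearEvent σ z X D i j) :=
  measurableSet_nearEvent_of_mem (by simpa using hil) (by simp) (by simpa using hjl)

namespace IsIIDModel

variable [mΩ : MeasurableSpace Ω] {P : Measure Ω} {f : ℝ → ℝ}

lemma measurable_sumElim (hM : IsIIDModel P n σ f X D) (t : Fin n ⊕ Fin n) :
    Measurable (Sum.elim X D t) := by
  cases t with
  | inl i => exact hM.X_meas i
  | inr i => exact hM.D_meas i

lemma coordSigmaAlgebra_le (hM : IsIIDModel P n σ f X D) (S : Set (Fin n ⊕ Fin n)) :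
    coordSigmaAlgebra X D S ≤ mΩ :=
  iSup₂_le fun t _ ↦ (hM.measurable_sumElim t).comap_le

lemma indep_coordSigmaAlgebra (hM : IsIIDModel P n σ f X D) {S T : Set (Fin n ⊕ Fin n)}
    (hST : Disjoint S T) : Indep (coordSigmaAlgebra X D S) (coordSigmaAlgebra X D T) P :=
  indep_iSup_of_disjoint (fun t ↦ (hM.measurable_sumElim t).comap_le)
    ((iIndepFun_iff_iIndep _ _ _).1 hM.indep) hST

lemma measurableSet_nearEvent (hM : IsIIDModel P n σ f X D) (i j : Fin n) :
    MeasurableSet (nearEvent σ z X D i j) :=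
  hM.coordSigmaAlgebra_le univ _
    (measurableSet_nearEvent_of_mem (mem_univ _) (mem_univ _) (mem_univ _))

lemma measureReal_inter_abs_sub_le (hM : IsIIDModel P n σ f X D) (j : Fin n) {W : Ω → ℝ}
    (hW : Measurable[coordSigmaAlgebra X D {Sum.inl j}ᶜ] W) {B : Set Ω}
    (hB : MeasurableSet[coordSigmaAlgebra X D {Sum.inl j}ᶜ] B) {r : ℝ} (hr : 0 ≤ r) :
    P.real (B ∩ {ω | |X j ω - W ω| ≤ r}) ≤ 2 * r * P.real B := by
  have := hM.prob
  have hXj : coordSigmaAlgebra X D {Sum.inl j} = .comap (X j) inferInstance := iSup_singleton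
  have hind := hM.indep_coordSigmaAlgebra (disjoint_compl_left (a := {Sum.inl j}))
  rw [hXj] at hind
  have hlaw : P.map (X j) ≤ volume := (hM.lawX j).trans_le Measure.restrict_le_self
  have h := measure_inter_abs_sub_le_of_indep (hM.coordSigmaAlgebra_le _) (hM.X_meas j) hind hlaw
    hW hB r
  rw [measureReal_def, measureReal_def, ← ENNReal.toReal_ofReal (by positivity : 0 ≤ 2 * r),
    ← ENNReal.toReal_mul]
  exact ENNReal.toReal_mono (by finiteness) h

variable {i j k l : Fin n}

lemma measureReal_nearEvent_le (hM : IsIIDModel P n σ f X D) (hz : 0 ≤ z) (hij : i ≠ j) :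
    P.real (nearEvent σ z X D i j) ≤ 2 * (σ * z) := by
  have := hM.prob
  simpa [nearEvent] using hM.measureReal_inter_abs_sub_le j
    (measurable_Ychild_coordSigmaAlgebra_compl hij) MeasurableSet.univ
    (mul_nonneg hM.sigma_pos.le hz)

lemma measureReal_nearEvent_inter_same_child (hM : IsIIDModel P n σ f X D) (hz : 0 ≤ z)
    (hij : i ≠ j) (hil : i ≠ l) (hjl : j ≠ l) :
    P.real (nearEvent σ z X D i j ∩ nearEvent σ z X D i l) ≤ 4 * (σ * z) ^ 2 := by
  have hσz : 0 ≤ σ * z := mul_nonneg hM.sigma_pos.le hz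
  calc P.real (nearEvent σ z X D i j ∩ nearEvent σ z X D i l)
      = P.real (nearEvent σ z X D i l ∩ nearEvent σ z X D i j) := by rw [inter_comm]
    _ ≤ 2 * (σ * z) * P.real (nearEvent σ z X D i l) :=
      hM.measureReal_inter_abs_sub_le j
        (measurable_Ychild_coordSigmaAlgebra_compl hij)
        (measurableSet_nearEvent_coordSigmaAlgebra_compl hij hjl.symm) hσz
    _ ≤ 2 * (σ * z) * (2 * (σ * z)) := by gcongr; exact hM.measureReal_nearEvent_le hz hil
    _ = 4 * (σ * z) ^ 2 := by ring

lemma measureReal_nearEvent_inter_chain (hM : IsIIDModel P n σ f X D) (hz : 0 ≤ z)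
    (hij : i ≠ j) (hil : i ≠ l) (hjl : j ≠ l) :
    P.real (nearEvent σ z X D i j ∩ nearEvent σ z X D j l) ≤ 4 * (σ * z) ^ 2 := by
  have hσz : 0 ≤ σ * z := mul_nonneg hM.sigma_pos.le hz
  calc P.real (nearEvent σ z X D i j ∩ nearEvent σ z X D j l)
      ≤ 2 * (σ * z) * P.real (nearEvent σ z X D i j) :=
      hM.measureReal_inter_abs_sub_le l
        (measurable_Ychild_coordSigmaAlgebra_compl hjl)
        (measurableSet_nearEvent_coordSigmaAlgebra_compl hil hjl) hσz
    _ ≤ 2 * (σ * z) * (2 * (σ * z)) := by gcongr; exact hM.measureReal_nearEvent_le hz hij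
    _ = 4 * (σ * z) ^ 2 := by ring

/-- Two children within `σ z` of the same parent are within `2 σ z` of each other, which the
uniform parent `X i` of the first child achieves with probability at most `4 σ z`. -/
lemma measureReal_nearEvent_inter_same_parent (hM : IsIIDModel P n σ f X D) (hz : 0 ≤ z)
    (hij : i ≠ j) (hik : i ≠ k) (hkj : k ≠ j) :
    P.real (nearEvent σ z X D i j ∩ nearEvent σ z X D k j) ≤ 8 * (σ * z) ^ 2 := by
  have := hM.prob
  have hσz : 0 ≤ σ * z := mul_nonneg hM.sigma_pos.le hz
  set B := {ω | |X i ω - (Ychild σ X D k ω - σ * D i ω)| ≤ 2 * (σ * z)}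
  have hsub : nearEvent σ z X D i j ∩ nearEvent σ z X D k j ⊆ B ∩ nearEvent σ z X D i j := by
    rintro ω ⟨hi, hk⟩
    refine ⟨?_, hi⟩
    simp only [nearEvent, Ychild, mem_ofPred_eq, abs_le, B] at hi hk ⊢
    constructor <;> linarith [hi.1, hi.2, hk.1, hk.2]
  have hB : MeasurableSet[coordSigmaAlgebra X D {Sum.inl j}ᶜ] B :=
    measurableSet_le (measurable_abs.comp ((measurable_X_coordSigmaAlgebra_compl hij).sub
      ((measurable_Ychild_coordSigmaAlgebra_compl hkj).sub
        ((measurable_D_coordSigmaAlgebra_compl j i).const_mul σ)))) measurable_const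
  have hPB : P.real B ≤ 2 * (2 * (σ * z)) := by
    simpa using hM.measureReal_inter_abs_sub_le i
      ((measurable_Ychild_coordSigmaAlgebra_compl hik.symm).sub
        ((measurable_D_coordSigmaAlgebra_compl i i).const_mul σ))
      MeasurableSet.univ (by positivity : 0 ≤ 2 * (σ * z))
  calc P.real (nearEvent σ z X D i j ∩ nearEvent σ z X D k j)
      ≤ P.real (B ∩ nearEvent σ z X D i j) := measureReal_mono hsub
    _ ≤ 2 * (σ * z) * P.real B :=
      hM.measureReal_inter_abs_sub_le j
        (measurable_Ychild_coordSigmaAlgebra_compl hij) hB hσz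
    _ ≤ 2 * (σ * z) * (2 * (2 * (σ * z))) := by gcongr
    _ = 8 * (σ * z) ^ 2 := by ring

lemma measureReal_nearEvent_inter_le_pairWeight (hM : IsIIDModel P n σ f X D) (hz : 0 ≤ z)
    (hshare : k = i ∨ k = j ∨ l = i ∨ l = j) :
    P.real (nearEvent σ z X D i j ∩ nearEvent σ z X D k l)
      ≤ pairWeight (2 * (σ * z)) (8 * (σ * z) ^ 2) i j k l := by
  have := hM.prob
  have hσz : 0 ≤ σ * z := mul_nonneg hM.sigma_pos.le hz
  have ha : 0 ≤ 2 * (σ * z) := by positivity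
  have hb : 0 ≤ 8 * (σ * z) ^ 2 := by positivity
  have hle_ij : P.real (nearEvent σ z X D i j ∩ nearEvent σ z X D k l)
      ≤ P.real (nearEvent σ z X D i j) := measureReal_mono inter_subset_left
  have hle_kl : P.real (nearEvent σ z X D i j ∩ nearEvent σ z X D k l)
      ≤ P.real (nearEvent σ z X D k l) := measureReal_mono inter_subset_right
  by_cases hij : i = j
  · by_cases hkl : k = l
    · subst hij hkl
      exact measureReal_le_one.trans (one_le_pairWeight ha hb rfl (by simpa using hshare)
        (by simpa using hshare))
    · refine hle_kl.trans ((hM.measureReal_nearEvent_le hz hkl).trans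
        (le_pairWeight_of_sharedTwo ha hb (Or.inl ⟨hij, ?_⟩)))
      subst hij; simpa using hshare
  by_cases hkl : k = l
  · refine hle_ij.trans ((hM.measureReal_nearEvent_le hz hij).trans
      (le_pairWeight_of_sharedTwo ha hb (Or.inr (Or.inl ⟨hkl, ?_⟩))))
    subst hkl; grind
  by_cases htwo : k = i ∧ l = j ∨ k = j ∧ l = i
  · exact hle_ij.trans ((hM.measureReal_nearEvent_le hz hij).trans
      (le_pairWeight_of_sharedTwo ha hb (Or.inr (Or.inr htwo))))
  refine le_trans ?_ (le_pairWeight_of_sharedOne ha hb hshare)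
  have h48 : 4 * (σ * z) ^ 2 ≤ 8 * (σ * z) ^ 2 := by nlinarith
  rcases hshare with rfl | rfl | rfl | rfl
  · exact (hM.measureReal_nearEvent_inter_same_child hz hij hkl (by grind)).trans h48
  · exact (hM.measureReal_nearEvent_inter_chain hz hij (by grind) hkl).trans h48
  · rw [inter_comm]
    exact (hM.measureReal_nearEvent_inter_chain hz hkl (by grind) hij).trans h48
  · exact hM.measureReal_nearEvent_inter_same_parent hz hij (by grind) hkl

lemma measureReal_nearEvent_inter_of_disjoint (hM : IsIIDModel P n σ f X D)
    (hki : k ≠ i) (hkj : k ≠ j) (hli : l ≠ i) (hlj : l ≠ j) :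
    P.real (nearEvent σ z X D i j ∩ nearEvent σ z X D k l)
      = P.real (nearEvent σ z X D i j) * P.real (nearEvent σ z X D k l) := by
  have hST : Disjoint ({Sum.inl i, Sum.inr i, Sum.inl j} : Set (Fin n ⊕ Fin n))
      {Sum.inl k, Sum.inr k, Sum.inl l} := by
    simp [Set.disjoint_left, hki.symm, hkj.symm, hli.symm, hlj.symm]
  have h := (Indep_iff _ _ _).1 (hM.indep_coordSigmaAlgebra hST) _ _
    (measurableSet_nearEvent_of_mem (σ := σ) (z := z) (i := i) (j := j) (by simp) (by simp)
      (by simp))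
    (measurableSet_nearEvent_of_mem (σ := σ) (z := z) (i := k) (j := l) (by simp) (by simp)
      (by simp))
  simp [measureReal_def, h, ENNReal.toReal_mul]

lemma covariance_indicator_nearEvent_le (hM : IsIIDModel P n σ f X D) (hz : 0 ≤ z)
    (i j k l : Fin n) :
    cov[(nearEvent σ z X D i j).indicator 1, (nearEvent σ z X D k l).indicator 1; P]
      ≤ pairWeight (2 * (σ * z)) (8 * (σ * z) ^ 2) i j k l := by
  have := hM.prob
  rw [covariance_indicator_one (hM.measurableSet_nearEvent i j) (hM.measurableSet_nearEvent k l)]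
  by_cases hshare : k = i ∨ k = j ∨ l = i ∨ l = j
  · have hinter := hM.measureReal_nearEvent_inter_le_pairWeight hz hshare
    have hprod := mul_nonneg (measureReal_nonneg (μ := P) (s := nearEvent σ z X D i j))
      (measureReal_nonneg (μ := P) (s := nearEvent σ z X D k l))
    linarith
  · obtain ⟨hki, hkj, hli, hlj⟩ : k ≠ i ∧ k ≠ j ∧ l ≠ i ∧ l ≠ j := by tauto
    rw [hM.measureReal_nearEvent_inter_of_disjoint hki hkj hli hlj, sub_self]
    exact pairWeight_nonneg (by have := hM.sigma_pos; positivity) (by positivity)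

lemma variance_sum_indicator_nearEvent_le (hM : IsIIDModel P n σ f X D) (hz : 0 ≤ z) :
    Var[fun ω ↦ ∑ p : Fin n × Fin n, (nearEvent σ z X D p.1 p.2).indicator 1 ω; P]
      ≤ n + 12 * (σ * z) * n ^ 2 + 32 * (σ * z) ^ 2 * n ^ 3 := by
  have := hM.prob
  have hmem (p : Fin n × Fin n) :
      MemLp ((nearEvent σ z X D p.1 p.2).indicator (1 : Ω → ℝ)) 2 P :=
    (memLp_const 1).indicator (hM.measurableSet_nearEvent p.1 p.2)
  rw [variance_fun_sum hmem]
  calc ∑ p : Fin n × Fin n, ∑ q : Fin n × Fin n,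
        cov[(nearEvent σ z X D p.1 p.2).indicator 1, (nearEvent σ z X D q.1 q.2).indicator 1; P]
      ≤ ∑ p : Fin n × Fin n, ∑ q : Fin n × Fin n,
          pairWeight (2 * (σ * z)) (8 * (σ * z) ^ 2) p.1 p.2 q.1 q.2 := by
        gcongr with p _ q _
        exact hM.covariance_indicator_nearEvent_le hz _ _ _ _
    _ = n + 12 * (σ * z) * n ^ 2 + 32 * (σ * z) ^ 2 * n ^ 3 := by
        simp only [Fintype.sum_prod_type, sum_pairWeight, Fintype.card_fin]
        ring

end IsIIDModel

end Model

lemma inv_sq_mul_add_le (n : ℕ) {a b : ℝ} (ha : 0 ≤ a) :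
    (n : ℝ)⁻¹ ^ 2 * (n + a * n ^ 2 + b * n ^ 3) ≤ (n : ℝ)⁻¹ + a + b * n := by
  rcases n.eq_zero_or_pos with rfl | hn
  · simpa using ha
  · exact le_of_eq (by field_simp)

theorem counting_estimator_variance_general
    (f : ℝ → ℝ)
    (z : ℝ) (hz : 0 ≤ z) :
    ∃ C : ℝ, 0 < C ∧
      ∀ (Ω : Type) (_ : MeasurableSpace Ω) (P : Measure Ω)
        (n : ℕ) (σ : ℝ) (X D : Fin n → Ω → ℝ),
        IsIIDModel P n σ f X D →
        (∫ ω, (((n : ℝ)⁻¹ * ∑ i, ∑ j,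
              (if |X j ω - Ychild σ X D i ω| ≤ σ * z then (1:ℝ) else 0))
              - 2 * σ * ((n : ℝ) - 1) * z
            - ∫ ω', (((n : ℝ)⁻¹ * ∑ i, ∑ j,
                (if |X j ω' - Ychild σ X D i ω'| ≤ σ * z then (1:ℝ) else 0))
                - 2 * σ * ((n : ℝ) - 1) * z) ∂P) ^ 2 ∂P)
          ≤ C * ((n : ℝ)⁻¹ + σ + σ ^ 2 * n) := by
  refine ⟨1 + 12 * z + 32 * z ^ 2, by positivity, fun Ω _ P n σ X D hM ↦ ?_⟩
  have := hM.prob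
  set S : Ω → ℝ := fun ω ↦ ∑ p : Fin n × Fin n, (nearEvent σ z X D p.1 p.2).indicator 1 ω
  have hS : ∀ ω, ∑ i, ∑ j, (if |X j ω - Ychild σ X D i ω| ≤ σ * z then (1:ℝ) else 0) = S ω := by
    intro ω
    simp only [S, Set.indicator_apply, nearEvent, mem_ofPred_eq, Pi.one_apply,
      Fintype.sum_prod_type]
  have hSm : Measurable S :=
    Finset.measurable_sum _ fun p _ ↦ measurable_const.indicator (hM.measurableSet_nearEvent _ _)
  simp only [hS]
  rw [← variance_eq_integral (by fun_prop), variance_sub_const (by fun_prop), variance_const_mul]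
  have hσ := hM.sigma_pos
  calc (n : ℝ)⁻¹ ^ 2 * Var[S; P]
      ≤ (n : ℝ)⁻¹ ^ 2 * (n + 12 * (σ * z) * n ^ 2 + 32 * (σ * z) ^ 2 * n ^ 3) := by
        gcongr; exact hM.variance_sum_indicator_nearEvent_le hz
    _ ≤ (n : ℝ)⁻¹ + 12 * (σ * z) + 32 * (σ * z) ^ 2 * n := inv_sq_mul_add_le n (by positivity)
    _ ≤ (1 + 12 * z + 32 * z ^ 2) * ((n : ℝ)⁻¹ + σ + σ ^ 2 * n) := by
        have : 0 ≤ (12 * z + 32 * z ^ 2) * (n : ℝ)⁻¹ + (1 + 32 * z ^ 2) * σ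
            + (1 + 12 * z) * (σ ^ 2 * n) := by positivity
        linarith

/-- Proposition 13: variance bound for the counting estimator. -/
theorem counting_estimator_variance
    (f : ℝ → ℝ) (hmeas : Measurable f) (hnonneg : ∀ z, 0 ≤ f z) (hprob : ∫ z, f z = 1)
    (hmom : Integrable fun x => |x| * f x)
    (z : ℝ) (hz : 0 ≤ z) :
    ∃ C : ℝ, 0 < C ∧
      ∀ (Ω : Type) (_ : MeasurableSpace Ω) (P : Measure Ω)
        (n : ℕ) (σ : ℝ) (X D : Fin n → Ω → ℝ),
        IsIIDModel P n σ f X D →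
        (∫ ω, (((n : ℝ)⁻¹ * ∑ i, ∑ j,
              (if |X j ω - Ychild σ X D i ω| ≤ σ * z then (1:ℝ) else 0))
              - 2 * σ * ((n : ℝ) - 1) * z
            - ∫ ω', (((n : ℝ)⁻¹ * ∑ i, ∑ j,
                (if |X j ω' - Ychild σ X D i ω'| ≤ σ * z then (1:ℝ) else 0))
                - 2 * σ * ((n : ℝ) - 1) * z) ∂P) ^ 2 ∂P)
          ≤ C * ((n : ℝ)⁻¹ + σ + σ ^ 2 * n) :=
  counting_estimator_variance_general f z hz
end
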